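/- arXiv:2511.19051 — 8 statements merged into one kernel-verified Lean document; each statement's English description precedes it below -/
import Mathlib

section
/- Let p > 0 be a prime, and let S and T be finite nonempty subsets of the positive integers consisting entirely of powers of p. Write T = {m_1 > m_2 > ... > m_s} and define J_T = {m_1, m_1 - m_2, ..., m_1 - m_s}. If S = J_T, then either S = T is a singleton, or p = 2 and S = T = {2^u, 2^(u+1)} for some natural number u. -/
lemma key_pow {p a b c : ℕ} (hp : p.Prime) (hba : b < a) (h : p ^ a - p ^ b = p ^ c) :
    p = 2 ∧ a = b + 1 := by
  have hp1 : 1 < p := hp.one_lt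
  have hfac : p ^ c = p ^ b * (p ^ (a - b) - 1) := by
    have h1 : p ^ a = p ^ b * p ^ (a - b) := by rw [← pow_add]; congr 1; omega
    rw [Nat.mul_sub, mul_one, ← h1, h]
  have hd : 1 ≤ a - b := by omega
  have hge : 2 ≤ p ^ (a - b) := by
    calc 2 ≤ p := hp.two_le
    _ = p ^ 1 := (pow_one p).symm
    _ ≤ p ^ (a - b) := Nat.pow_le_pow_right hp.pos hd
  rcases lt_trichotomy c b with h1 | h1 | h1
  · exfalso
    have hlt : p ^ c < p ^ b := Nat.pow_lt_pow_right hp1 h1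
    have hle : p ^ b ≤ p ^ c := by
      calc p ^ b = p ^ b * 1 := (mul_one _).symm
      _ ≤ p ^ b * (p ^ (a - b) - 1) := Nat.mul_le_mul_left _ (by omega)
      _ = p ^ c := hfac.symm
    omega
  · have hbpos : 0 < p ^ b := Nat.pow_pos hp.pos
    rw [h1] at hfac
    have hone : 1 = p ^ (a - b) - 1 :=
      Nat.eq_of_mul_eq_mul_left hbpos (by rw [mul_one]; exact hfac)
    have h2 : p ^ (a - b) = 2 := by omega
    have hp2 : p = 2 := by
      have hdvd : p ∣ p ^ (a - b) := dvd_pow_self p (by omega)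
      rw [h2] at hdvd
      exact (Nat.prime_dvd_prime_iff_eq hp Nat.prime_two).mp hdvd
    refine ⟨hp2, ?_⟩
    rw [hp2] at h2
    have hab1 : a - b = 1 := by
      rcases Nat.lt_or_ge (a - b) 2 with h' | h'
      · omega
      · exfalso
        have : (2:ℕ) ^ 2 ≤ 2 ^ (a - b) := Nat.pow_le_pow_right (by norm_num) h'
        omega
    omega
  · exfalso
    have h1' : p ^ c = p ^ b * p ^ (c - b) := by rw [← pow_add]; congr 1; omega
    rw [h1'] at hfac
    have hbpos : 0 < p ^ b := Nat.pow_pos hp.pos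
    have heq : p ^ (c - b) = p ^ (a - b) - 1 := Nat.eq_of_mul_eq_mul_left hbpos hfac
    have hdvd1 : p ∣ p ^ (c - b) := dvd_pow_self p (by omega)
    have hdvd2 : p ∣ p ^ (a - b) := dvd_pow_self p (by omega)
    rw [heq] at hdvd1
    have hdvd : p ∣ p ^ (a - b) - (p ^ (a - b) - 1) := Nat.dvd_sub hdvd2 hdvd1
    rw [show p ^ (a - b) - (p ^ (a - b) - 1) = 1 by omega] at hdvd
    have := Nat.le_of_dvd one_pos hdvd
    omega

/-- Let `p > 0` be a prime, and let `S` and `T` be finite nonempty subsets of the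
positive integers consisting entirely of powers of `p`. Writing `T = {m₁ > m₂ > ... > m_s}` and
`J_T = {m₁, m₁ - m₂, ..., m₁ - m_s}`, if `S = J_T` then either `S = T` is a singleton, or `p = 2`
and `S = T = {2^u, 2^(u+1)}` for some natural number `u`. -/
theorem stmt0 (p : ℕ) (hp : p.Prime) (S T : Finset ℕ)
    (hS : S.Nonempty) (hT : T.Nonempty)
    (hSpow : ∀ m ∈ S, ∃ k : ℕ, m = p ^ k)
    (hTpow : ∀ m ∈ T, ∃ k : ℕ, m = p ^ k)
    (hST : S = insert (T.max' hT) ((T.erase (T.max' hT)).image (fun m => T.max' hT - m))) :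
    (S = T ∧ S.card = 1) ∨
      (p = 2 ∧ ∃ u : ℕ, S = T ∧ S = {2 ^ u, 2 ^ (u + 1)}) := by
  set M := T.max' hT with hM
  obtain ⟨a, ha⟩ := hTpow M (T.max'_mem hT)
  by_cases hsing : T.erase M = ∅
  · left
    have hT1 : T = {M} := by
      rcases (Finset.erase_eq_empty_iff T M).mp hsing with h | h
      · exact absurd h (Finset.nonempty_iff_ne_empty.mp hT)
      · exact h
    have hS1 : S = {M} := by
      rw [hST, hsing]
      simp
    rw [hS1, hT1]
    simp
  · right
    obtain ⟨m, hm⟩ := Finset.nonempty_of_ne_empty hsing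
    have harg : ∀ x ∈ T.erase M, ∃ b, x = p ^ b ∧ p = 2 ∧ a = b + 1 := by
      intro x hx
      have hxT := Finset.mem_of_mem_erase hx
      have hxne := Finset.ne_of_mem_erase hx
      obtain ⟨b, hb⟩ := hTpow x hxT
      have hxM : x < M := lt_of_le_of_ne (T.le_max' x hxT) hxne
      have hba : b < a := by
        have hlt : p ^ b < p ^ a := by rw [← hb, ← ha]; exact hxM
        exact (Nat.pow_lt_pow_iff_right hp.one_lt).mp hlt
      have hmem : M - x ∈ S := by
        rw [hST]
        exact Finset.mem_insert_of_mem (Finset.mem_image_of_mem _ hx)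
      obtain ⟨c, hc⟩ := hSpow _ hmem
      have hc' : p ^ a - p ^ b = p ^ c := by rw [← ha, ← hb]; exact hc
      obtain ⟨hp2, hab⟩ := key_pow hp hba hc'
      exact ⟨b, hb, hp2, hab⟩
    obtain ⟨b, hb, hp2, hab⟩ := harg m hm
    subst hp2
    have herase : T.erase M = {2 ^ b} := by
      apply Finset.eq_singleton_iff_unique_mem.mpr
      refine ⟨hb ▸ hm, ?_⟩
      intro x hx
      obtain ⟨b', hb', _, hab'⟩ := harg x hx
      have : b' = b := by omega
      rw [hb', this]
    have hsub : (2:ℕ) ^ (b + 1) - 2 ^ b = 2 ^ b := by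
      have : (2:ℕ) ^ (b + 1) = 2 * 2 ^ b := by ring
      omega
    have hMval : M = 2 ^ (b + 1) := by rw [ha, hab]
    have hS2 : S = {2 ^ (b + 1), 2 ^ b} := by
      rw [hST, herase, Finset.image_singleton, hMval, hsub]
    have hT2 : T = {2 ^ (b + 1), 2 ^ b} := by
      rw [← Finset.insert_erase (T.max'_mem hT), ← hM, herase, hMval]
    refine ⟨rfl, b, by rw [hS2, hT2], ?_⟩
    rw [hS2, Finset.pair_comm]
end

section
/- Let R be a field and c an n × n matrix over R. Then the centralizer algebra S_n(c,R) is isomorphic as an R-algebra to its opposite algebra S_n(c,R)^op. -/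
open Polynomial Module
open scoped DirectSum Matrix

namespace Stmt4Aux

variable {K : Type*} [Field K]

section Cyclic

variable (q : K[X]) (hq : q.Monic)

noncomputable instance : Module K[X] (AdjoinRoot q) :=
  inferInstanceAs (Module K[X] (K[X] ⧸ (Ideal.span {q} : Ideal K[X])))

instance : IsScalarTower K K[X] (AdjoinRoot q) :=
  inferInstanceAs (IsScalarTower K K[X] (K[X] ⧸ (Ideal.span {q} : Ideal K[X])))

lemma psmul_mk (p r : K[X]) : p • AdjoinRoot.mk q r = AdjoinRoot.mk q (p * r) := rfl

/-- Top-coefficient functional on `K[X]/(q)`. -/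
noncomputable def lamQ : AdjoinRoot q →ₗ[K] K :=
  (Polynomial.lcoeff K (q.natDegree - 1)).comp (AdjoinRoot.modByMonicHom hq)

/-- The multiplication pairing on `K[X]/(q)`. -/
noncomputable def Bq : AdjoinRoot q →ₗ[K] AdjoinRoot q →ₗ[K] K :=
  (LinearMap.mul K (AdjoinRoot q)).compr₂ (lamQ q hq)

lemma Bq_mk (r s : K[X]) :
    Bq q hq (AdjoinRoot.mk q r) (AdjoinRoot.mk q s) = ((r * s) %ₘ q).coeff (q.natDegree - 1) := by
  show lamQ q hq (AdjoinRoot.mk q r * AdjoinRoot.mk q s) = _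
  rw [← map_mul]
  show ((AdjoinRoot.modByMonicHom hq) (AdjoinRoot.mk q (r * s))).coeff _ = _
  rw [AdjoinRoot.modByMonicHom_mk]

lemma Bq_smul (p : K[X]) (x y : AdjoinRoot q) :
    Bq q hq (p • x) y = Bq q hq x (p • y) := by
  obtain ⟨r, rfl⟩ := AdjoinRoot.mk_surjective x
  obtain ⟨s, rfl⟩ := AdjoinRoot.mk_surjective y
  rw [psmul_mk, psmul_mk, Bq_mk, Bq_mk]
  congr 2
  ring

lemma Bq_nondeg (x : AdjoinRoot q) (hx : ∀ y, Bq q hq x y = 0) : x = 0 := by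
  obtain ⟨r, rfl⟩ := AdjoinRoot.mk_surjective x
  rcases eq_or_ne q.natDegree 0 with hd | hd
  · have hq1 : q = 1 := hq.natDegree_eq_zero.mp hd
    subst hq1
    rw [← map_zero (AdjoinRoot.mk (1 : K[X])), AdjoinRoot.mk_eq_mk]
    exact one_dvd _
  · have hmk : AdjoinRoot.mk q r = AdjoinRoot.mk q (r %ₘ q) := by
      rw [AdjoinRoot.mk_eq_mk]
      exact ⟨r /ₘ q, by nth_rewrite 1 [← modByMonic_add_div r q]; ring⟩
    rw [hmk] at hx ⊢
    set r' := r %ₘ q with hr'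
    rcases eq_or_ne r' 0 with h0 | h0
    · rw [h0, map_zero]
    · exfalso
      have hdeg : r'.natDegree < q.natDegree :=
        Polynomial.natDegree_lt_natDegree h0 (Polynomial.degree_modByMonic_lt r hq)
      have := hx (AdjoinRoot.mk q (X ^ (q.natDegree - 1 - r'.natDegree)))
      rw [Bq_mk] at this
      set m := q.natDegree - 1 - r'.natDegree with hm
      have hrX : r' * X ^ m ≠ 0 := by
        exact mul_ne_zero h0 (pow_ne_zero _ X_ne_zero)
      have hdeg2 : (r' * X ^ m).natDegree = q.natDegree - 1 := by
        rw [Polynomial.natDegree_mul h0 (pow_ne_zero _ X_ne_zero), natDegree_X_pow]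
        omega
      have hlt : (r' * X ^ m).degree < q.degree := by
        rw [Polynomial.degree_eq_natDegree hrX, hdeg2,
          Polynomial.degree_eq_natDegree hq.ne_zero]
        exact_mod_cast Nat.sub_lt (by omega) one_pos
      rw [(Polynomial.modByMonic_eq_self_iff hq).mpr hlt] at this
      have hc : r'.coeff r'.natDegree = 0 := by
        rw [← this]
        have h1 : q.natDegree - 1 = r'.natDegree + m := by omega
        rw [h1, Polynomial.coeff_mul_X_pow]
      exact h0 (Polynomial.leadingCoeff_eq_zero.mp hc)

end Cyclic

section DSum

variable {ι : Type*} [Fintype ι] [DecidableEq ι]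
  (N : ι → Type*) [∀ i, AddCommGroup (N i)] [∀ i, Module K (N i)]
  (B : ∀ i, N i →ₗ[K] N i →ₗ[K] K)

/-- Sum-of-components pairing on a finite direct sum. -/
noncomputable def Bds : (⨁ i, N i) →ₗ[K] (⨁ i, N i) →ₗ[K] K :=
  LinearMap.mk₂ K (fun x y => ∑ i, B i (x i) (y i))
    (fun x x' y => by simp [DirectSum.add_apply, Finset.sum_add_distrib])
    (fun t x y => by simp [DirectSum.smul_apply, Finset.mul_sum])
    (fun x y y' => by simp [DirectSum.add_apply, Finset.sum_add_distrib])
    (fun t x y => by simp [DirectSum.smul_apply, Finset.mul_sum])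

lemma Bds_apply (x y : ⨁ i, N i) : Bds N B x y = ∑ i, B i (x i) (y i) := rfl

lemma Bds_nondeg (hB : ∀ i (a : N i), (∀ b, B i a b = 0) → a = 0)
    (x : ⨁ i, N i) (hx : ∀ y, Bds N B x y = 0) : x = 0 := by
  refine DFinsupp.ext fun i => ?_
  refine hB i (x i) fun b => ?_
  have := hx (DirectSum.lof K ι N i b)
  rw [Bds_apply, Finset.sum_eq_single i] at this
  · rwa [DirectSum.lof_apply] at this
  · intro j _ hj
    rw [DirectSum.lof_eq_of, DirectSum.of_eq_of_ne _ _ _ hj, map_zero]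
  · intro h; exact absurd (Finset.mem_univ i) h

lemma Bds_smul {A : Type*} [CommRing A] [Algebra K A] [∀ i, Module A (N i)]
    [∀ i, IsScalarTower K A (N i)] (p : A)
    (hB : ∀ i (a b : N i), B i (p • a) b = B i a (p • b))
    (x y : ⨁ i, N i) : Bds N B (p • x) y = Bds N B x (p • y) := by
  rw [Bds_apply, Bds_apply]
  refine Finset.sum_congr rfl fun i _ => ?_
  rw [DirectSum.smul_apply, DirectSum.smul_apply]
  exact hB i _ _

end DSum

section Assemble

/-- Matrices agreeing on all bilinear evaluations are equal. -/
lemma matrix_ext_of_dot {n : ℕ} (A B : Matrix (Fin n) (Fin n) K)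
    (h : ∀ v w : Fin n → K, v ⬝ᵥ A.mulVec w = v ⬝ᵥ B.mulVec w) : A = B := by
  ext i j
  have := h (Pi.single i 1) (Pi.single j 1)
  rwa [Matrix.mulVec_single_one, Matrix.mulVec_single_one, single_dotProduct,
    single_dotProduct, one_mul, one_mul, Matrix.col_apply, Matrix.col_apply] at this

theorem exists_intertwiner {n : ℕ} (c : Matrix (Fin n) (Fin n) K) :
    ∃ P : Matrix (Fin n) (Fin n) K, IsUnit P ∧ cᵀ * P = P * c := by
  classical
  set f : (Fin n → K) →ₗ[K] (Fin n → K) := c.mulVecLin with hf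
  have htor : Module.IsTorsion K[X] (Module.AEval' f) :=
    Module.AEval.isTorsion_of_finiteDimensional K (Fin n → K) f
  obtain ⟨ι, fι, p, hp, e, ⟨iso⟩⟩ := Module.equiv_directSum_of_isTorsion htor
  have hpe0 : ∀ i, (p i ^ e i) ≠ 0 := fun i => pow_ne_zero _ (hp i).ne_zero
  set q : ι → K[X] := fun i => (p i ^ e i) * Polynomial.C (p i ^ e i).leadingCoeff⁻¹ with hq
  have hqmonic : ∀ i, (q i).Monic := fun i =>
    Polynomial.monic_mul_leadingCoeff_inv (hpe0 i)
  have hspan : ∀ i, (K[X] ∙ (p i ^ e i)) = (Ideal.span {q i} : Ideal K[X]) := by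
    intro i
    rw [Ideal.submodule_span_eq, Ideal.span_singleton_eq_span_singleton]
    exact associated_mul_unit_right _ _ (isUnit_C.mpr (isUnit_iff_ne_zero.mpr
      (inv_ne_zero (Polynomial.leadingCoeff_ne_zero.mpr (hpe0 i)))))
  set isoA : Module.AEval' f ≃ₗ[K[X]] ⨁ i, AdjoinRoot (q i) :=
    iso.trans (DFinsupp.mapRange.linearEquiv fun i =>
      (Submodule.quotEquivOfEq _ _ (hspan i) :
        (K[X] ⧸ (K[X] ∙ (p i ^ e i))) ≃ₗ[K[X]] AdjoinRoot (q i))) with hisoA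
  set g : (Fin n → K) ≃ₗ[K] ⨁ i, AdjoinRoot (q i) :=
    (Module.AEval'.of f).trans (isoA.restrictScalars K) with hg
  set B : (Fin n → K) →ₗ[K] (Fin n → K) →ₗ[K] K :=
    (Bds (fun i => AdjoinRoot (q i)) (fun i => Bq (q i) (hqmonic i))).compl₁₂
      g.toLinearMap g.toLinearMap with hB
  -- key compatibility
  have hXg : ∀ v : Fin n → K, g (f v) = (X : K[X]) • g v := by
    intro v
    show isoA ((Module.AEval'.of f) (f v)) = (X : K[X]) • isoA ((Module.AEval'.of f) v)
    rw [← map_smul, Module.AEval'.X_smul_of]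
  have hcompat : ∀ v w : Fin n → K, B (f v) w = B v (f w) := by
    intro v w
    show Bds _ _ (g (f v)) (g w) = Bds _ _ (g v) (g (f w))
    rw [hXg, hXg]
    exact Bds_smul _ _ (X : K[X]) (fun i a b => Bq_smul (q i) (hqmonic i) X a b) _ _
  have hnondeg : ∀ v : Fin n → K, (∀ w, B v w = 0) → v = 0 := by
    intro v hv
    have : g v = 0 := by
      refine Bds_nondeg _ _ (fun i a hab => Bq_nondeg (q i) (hqmonic i) a hab) _ fun y => ?_
      obtain ⟨w, rfl⟩ := g.surjective y
      exact hv w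
    simpa using g.injective (by simpa using this)
  -- the matrix of B
  set P : Matrix (Fin n) (Fin n) K := LinearMap.toMatrix₂' K B with hP
  have hBeval : ∀ v w : Fin n → K, B v w = v ⬝ᵥ P.mulVec w := by
    intro v w
    rw [← Matrix.toLinearMap₂'_apply' P v w, hP]
    rw [Matrix.toLinearMap₂'_toMatrix']
  refine ⟨P, ?_, ?_⟩
  · rw [Matrix.isUnit_iff_isUnit_det, isUnit_iff_ne_zero]
    intro hdet
    have hdetT : Pᵀ.det = 0 := by rw [Matrix.det_transpose]; exact hdet
    obtain ⟨v, hv0, hv⟩ := (Matrix.exists_mulVec_eq_zero_iff.mpr hdetT)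
    refine hv0 (hnondeg v fun w => ?_)
    rw [hBeval, Matrix.dotProduct_mulVec, ← Matrix.mulVec_transpose, hv]
    exact zero_dotProduct _
  · refine matrix_ext_of_dot _ _ fun v w => ?_
    have h1 : v ⬝ᵥ (cᵀ * P).mulVec w = B (f v) w := by
      rw [hBeval, ← Matrix.mulVec_mulVec, Matrix.dotProduct_mulVec v cᵀ,
        Matrix.vecMul_transpose]
      rfl
    have h2 : v ⬝ᵥ (P * c).mulVec w = B v (f w) := by
      rw [hBeval, ← Matrix.mulVec_mulVec]
      rfl
    rw [h1, h2, hcompat]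

end Assemble

end Stmt4Aux

/-- For a field `R` and `c ∈ M_n(R)`, the centralizer algebra `S_n(c,R)` is
isomorphic as an `R`-algebra to its opposite algebra `S_n(c,R)ᵒᵖ`. -/
theorem stmt4 (R : Type*) [Field R] (n : ℕ) (c : Matrix (Fin n) (Fin n) R) :
    Nonempty ((Subalgebra.centralizer R {c} : Subalgebra R (Matrix (Fin n) (Fin n) R)) ≃ₐ[R]
      ((Subalgebra.centralizer R {c} : Subalgebra R (Matrix (Fin n) (Fin n) R)))ᵐᵒᵖ) := by
  classical
  obtain ⟨P, hP, hPc⟩ := Stmt4Aux.exists_intertwiner c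
  have hdet : IsUnit P.det := (Matrix.isUnit_iff_isUnit_det P).mp hP
  have hPP : P * P⁻¹ = 1 := Matrix.mul_nonsing_inv P hdet
  have hPP' : P⁻¹ * P = 1 := Matrix.nonsing_inv_mul P hdet
  -- conjugation identities
  have hmulL : ∀ x y : Matrix (Fin n) (Fin n) R,
      (P⁻¹ * x * P) * (P⁻¹ * y * P) = P⁻¹ * (x * y) * P := by
    intro x y
    calc (P⁻¹ * x * P) * (P⁻¹ * y * P) = P⁻¹ * x * ((P * P⁻¹) * y * P) := by
          simp only [Matrix.mul_assoc]
      _ = P⁻¹ * (x * y) * P := by rw [hPP, Matrix.one_mul]; simp only [Matrix.mul_assoc]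
  have hL : ∀ m : Matrix (Fin n) (Fin n) R, P * (P⁻¹ * m * P) * P⁻¹ = m := by
    intro m
    calc P * (P⁻¹ * m * P) * P⁻¹ = (P * P⁻¹) * m * (P * P⁻¹) := by simp only [Matrix.mul_assoc]
      _ = m := by rw [hPP]; simp
  have hR : ∀ m : Matrix (Fin n) (Fin n) R, P⁻¹ * (P * m * P⁻¹) * P = m := by
    intro m
    calc P⁻¹ * (P * m * P⁻¹) * P = (P⁻¹ * P) * m * (P⁻¹ * P) := by simp only [Matrix.mul_assoc]
      _ = m := by rw [hPP']; simp
  have hc1 : P⁻¹ * cᵀ * P = c := by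
    rw [Matrix.mul_assoc, hPc, ← Matrix.mul_assoc, hPP', Matrix.one_mul]
  have hcT : P * c * P⁻¹ = cᵀ := by
    rw [← hPc, Matrix.mul_assoc, hPP, Matrix.mul_one]
  have hTcomm : ∀ a : Matrix (Fin n) (Fin n) R, c * a = a * c → cᵀ * aᵀ = aᵀ * cᵀ := by
    intro a hca
    rw [← Matrix.transpose_mul, ← Matrix.transpose_mul, hca]
  have memS : ∀ {a : Matrix (Fin n) (Fin n) R},
      a ∈ Subalgebra.centralizer R {c} ↔ c * a = a * c := by
    intro a
    rw [Subalgebra.mem_centralizer_iff]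
    constructor
    · intro h; exact h c rfl
    · rintro h g rfl; exact h
  have memFwd : ∀ a : Matrix (Fin n) (Fin n) R, c * a = a * c →
      c * (P⁻¹ * aᵀ * P) = (P⁻¹ * aᵀ * P) * c := by
    intro a hca
    calc c * (P⁻¹ * aᵀ * P) = (P⁻¹ * cᵀ * P) * (P⁻¹ * aᵀ * P) := by rw [hc1]
      _ = P⁻¹ * (cᵀ * aᵀ) * P := hmulL _ _
      _ = P⁻¹ * (aᵀ * cᵀ) * P := by rw [hTcomm a hca]
      _ = (P⁻¹ * aᵀ * P) * (P⁻¹ * cᵀ * P) := (hmulL _ _).symm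
      _ = (P⁻¹ * aᵀ * P) * c := by rw [hc1]
  have memBwd : ∀ m : Matrix (Fin n) (Fin n) R, c * m = m * c →
      c * (P * m * P⁻¹)ᵀ = (P * m * P⁻¹)ᵀ * c := by
    intro m hcm
    have h1 : cᵀ * (P * m * P⁻¹) = (P * m * P⁻¹) * cᵀ := by
      calc cᵀ * (P * m * P⁻¹) = (P * c * P⁻¹) * (P * m * P⁻¹) := by rw [hcT]
        _ = P * c * ((P⁻¹ * P) * m * P⁻¹) := by simp only [Matrix.mul_assoc]
        _ = P * (c * m) * P⁻¹ := by rw [hPP']; simp only [Matrix.one_mul, Matrix.mul_assoc]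
        _ = P * (m * c) * P⁻¹ := by rw [hcm]
        _ = P * m * ((P⁻¹ * P) * c * P⁻¹) := by rw [hPP']; simp only [Matrix.one_mul,
            Matrix.mul_assoc]
        _ = (P * m * P⁻¹) * (P * c * P⁻¹) := by simp only [Matrix.mul_assoc]
        _ = (P * m * P⁻¹) * cᵀ := by rw [hcT]
    have h2 := congrArg Matrix.transpose h1
    simp only [Matrix.transpose_mul, Matrix.transpose_transpose] at h2
    simp only [Matrix.transpose_mul]
    simp only [Matrix.mul_assoc] at h2 ⊢
    exact h2.symm
  refine ⟨{
    toFun := fun a => MulOpposite.op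
      ⟨P⁻¹ * (a : Matrix (Fin n) (Fin n) R)ᵀ * P, memS.mpr (memFwd _ (memS.mp a.2))⟩
    invFun := fun b => ⟨(P * ((MulOpposite.unop b : Subalgebra.centralizer R {c}) :
        Matrix (Fin n) (Fin n) R) * P⁻¹)ᵀ,
        memS.mpr (memBwd _ (memS.mp (MulOpposite.unop b).2))⟩
    left_inv := ?_
    right_inv := ?_
    map_mul' := ?_
    map_add' := ?_
    commutes' := ?_ }⟩
  · intro a
    ext1
    show (P * (P⁻¹ * (a : Matrix (Fin n) (Fin n) R)ᵀ * P) * P⁻¹)ᵀ = (a : Matrix (Fin n) (Fin n) R)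
    rw [hL, Matrix.transpose_transpose]
  · intro b
    apply MulOpposite.unop_injective
    ext1
    show P⁻¹ * ((P * ((MulOpposite.unop b : Subalgebra.centralizer R {c}) :
        Matrix (Fin n) (Fin n) R) * P⁻¹)ᵀ)ᵀ * P = _
    rw [Matrix.transpose_transpose, hR]
  · intro a b
    apply MulOpposite.unop_injective
    ext1
    show P⁻¹ * ((a * b : Subalgebra.centralizer R {c}) : Matrix (Fin n) (Fin n) R)ᵀ * P =
      ((P⁻¹ * (b : Matrix (Fin n) (Fin n) R)ᵀ * P) * (P⁻¹ * (a : Matrix (Fin n) (Fin n) R)ᵀ * P))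
    rw [hmulL, MulMemClass.coe_mul, Matrix.transpose_mul]
  · intro a b
    apply MulOpposite.unop_injective
    ext1
    show P⁻¹ * ((a + b : Subalgebra.centralizer R {c}) : Matrix (Fin n) (Fin n) R)ᵀ * P =
      (P⁻¹ * (a : Matrix (Fin n) (Fin n) R)ᵀ * P) + (P⁻¹ * (b : Matrix (Fin n) (Fin n) R)ᵀ * P)
    rw [AddMemClass.coe_add, Matrix.transpose_add, Matrix.mul_add, Matrix.add_mul]
  · intro r
    apply MulOpposite.unop_injective
    ext1
    show P⁻¹ * ((algebraMap R (Subalgebra.centralizer R {c}) r :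
        Matrix (Fin n) (Fin n) R))ᵀ * P = (algebraMap R (Subalgebra.centralizer R {c}) r :
        Matrix (Fin n) (Fin n) R)
    rw [Subalgebra.coe_algebraMap, Algebra.algebraMap_eq_smul_one, Matrix.transpose_smul,
      Matrix.transpose_one]
    rw [Matrix.mul_smul, Matrix.mul_one, Matrix.smul_mul, hPP']
end

section
/- Let R be a field and f(x) ∈ R[x] an irreducible separable polynomial with splitting field extension K := R[x]/(f(x)). Then for every n ≥ 1, the algebra A := R[x]/(f(x)^n) is isomorphic, as a K-algebra, to K[x]/(x^n). -/
open Polynomial Ideal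

set_option synthInstance.maxHeartbeats 1000000
set_option maxHeartbeats 1000000

/-- Shortcut instance (port repair): instance search no longer finds this `CommRing` structure
on its own. -/
noncomputable instance stmt6_quotCommRing (R : Type*) [Field R] (I : Ideal (Polynomial R))
    (J : Ideal (Polynomial (Polynomial R ⧸ I))) : CommRing (Polynomial (Polynomial R ⧸ I) ⧸ J) :=
  @Ideal.Quotient.commRing _ Polynomial.commRing J

section Aux

variable {R : Type*} [Field R] (f : Polynomial R)

/-- Hensel-style root lifting into `R[X]/(f^n)`. -/
theorem stmt6_aux_root (hsep : f.Separable) (n : ℕ) (hn : 1 ≤ n) :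
    ∃ α : Polynomial R ⧸ Ideal.span {f ^ n},
      Polynomial.aeval α f = 0 ∧
      (Ideal.Quotient.mk (Ideal.span {f ^ n})) X - α ∈
        Ideal.span {(Ideal.Quotient.mk (Ideal.span {f ^ n})) f} := by
  classical
  set mk : Polynomial R →+* (Polynomial R ⧸ Ideal.span {f ^ n}) := Ideal.Quotient.mk (Ideal.span {f ^ n}) with hmk
  set M : Ideal (Polynomial R ⧸ Ideal.span {f ^ n}) := Ideal.span {mk f} with hM
  have hfn0 : mk (f ^ n) = 0 := by
    rw [Ideal.Quotient.eq_zero_iff_mem]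
    exact Ideal.mem_span_singleton_self _
  have hnil : ∀ a : Polynomial R ⧸ Ideal.span {f ^ n}, a ∈ M → IsNilpotent a := by
    intro a ha
    obtain ⟨c, hc⟩ := Ideal.mem_span_singleton'.mp ha
    exact ⟨n, by rw [← hc, mul_pow, ← _root_.map_pow, hfn0, mul_zero]⟩
  have hunit : ∀ t : Polynomial R ⧸ Ideal.span {f ^ n}, Polynomial.aeval t f ∈ M → IsUnit (Polynomial.aeval t f.derivative) := by
    intro t ht
    obtain ⟨a, b, hab⟩ := hsep
    have h1 : (Polynomial.aeval t a) * (Polynomial.aeval t f)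
        + (Polynomial.aeval t b) * (Polynomial.aeval t f.derivative) = 1 := by
      rw [← _root_.map_mul, ← _root_.map_mul, ← _root_.map_add, hab, _root_.map_one]
    have h2 : (Polynomial.aeval t b) * (Polynomial.aeval t f.derivative)
        = 1 - (Polynomial.aeval t a) * (Polynomial.aeval t f) := by
      rw [← h1]; ring
    have h3 : IsNilpotent ((Polynomial.aeval t a) * (Polynomial.aeval t f)) :=
      hnil _ (Ideal.mul_mem_left _ _ ht)
    have h4 : IsUnit ((Polynomial.aeval t b) * (Polynomial.aeval t f.derivative)) := by
      rw [h2]; exact h3.isUnit_one_sub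
    exact isUnit_of_mul_isUnit_right h4
  have hbase : Polynomial.aeval (mk X) f = mk f := by
    have h := Polynomial.aeval_algHom_apply (Ideal.Quotient.mkₐ R (Ideal.span {f ^ n})) X f
    simpa [Ideal.Quotient.mkₐ_eq_mk] using h
  have key : ∀ k : ℕ, ∃ t : Polynomial R ⧸ Ideal.span {f ^ n}, mk X - t ∈ M ∧ Polynomial.aeval t f ∈ M ^ (k + 1) := by
    intro k
    induction k with
    | zero =>
      refine ⟨mk X, by simp, ?_⟩
      rw [zero_add, Submodule.pow_one, hbase]
      exact Ideal.mem_span_singleton_self _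
    | succ k ih =>
      obtain ⟨t, ht1, ht2⟩ := ih
      have htM : Polynomial.aeval t f ∈ M := (Ideal.pow_le_self (Nat.succ_ne_zero k)) ht2
      obtain ⟨v, hv⟩ := (hunit t htM).exists_right_inv
      set h : Polynomial R ⧸ Ideal.span {f ^ n} := -(Polynomial.aeval t f * v) with hh
      have hhM : h ∈ M ^ (k + 1) := neg_mem (Ideal.mul_mem_right _ _ ht2)
      obtain ⟨c, hc⟩ := Polynomial.binomExpansion (f.map (algebraMap R (Polynomial R ⧸ Ideal.span {f ^ n}))) t h
      have heval : ∀ s : Polynomial R ⧸ Ideal.span {f ^ n}, (f.map (algebraMap R (Polynomial R ⧸ Ideal.span {f ^ n}))).eval s = Polynomial.aeval s f := by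
        intro s; rw [Polynomial.eval_map, Polynomial.aeval_def]
      have heval' : ∀ s : Polynomial R ⧸ Ideal.span {f ^ n},
          ((f.map (algebraMap R (Polynomial R ⧸ Ideal.span {f ^ n}))).derivative).eval s = Polynomial.aeval s f.derivative := by
        intro s; rw [Polynomial.derivative_map, Polynomial.eval_map, Polynomial.aeval_def]
      rw [heval, heval, heval'] at hc
      have hfh : Polynomial.aeval t f.derivative * h = -(Polynomial.aeval t f) := by
        rw [hh]
        linear_combination (-(Polynomial.aeval t f)) * hv
      have hc' : Polynomial.aeval (t + h) f = c * h ^ 2 := by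
        rw [hc, hfh]; ring
      refine ⟨t + h, ?_, ?_⟩
      · have e : mk X - (t + h) = (mk X - t) - h := by ring
        rw [e]
        exact sub_mem ht1 ((Ideal.pow_le_self (Nat.succ_ne_zero k)) hhM)
      · rw [hc']
        have h2 : h ^ 2 ∈ M ^ (k + 1 + 1) := by
          have hmul : h ^ 2 ∈ M ^ (k + 1) * M ^ (k + 1) := by
            rw [pow_two]; exact Ideal.mul_mem_mul hhM hhM
          have hmul2 : h ^ 2 ∈ M ^ (k + 1 + (k + 1)) := by rw [Submodule.pow_add]; exact hmul; omega
          exact Ideal.pow_le_pow_right (by omega) hmul2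
        exact Ideal.mul_mem_left _ _ h2
  obtain ⟨t, ht1, ht2⟩ := key (n - 1)
  have hMn : M ^ (n - 1 + 1) = ⊥ := by
    have hnn : n - 1 + 1 = n := Nat.succ_pred_eq_of_pos hn
    have hz : (mk f) ^ n = 0 := by rw [← _root_.map_pow, hfn0]
    rw [hnn, hM, Ideal.span_singleton_pow, hz]
    exact Ideal.span_singleton_eq_bot.mpr rfl
  rw [hMn] at ht2
  exact ⟨t, Ideal.mem_bot.mp ht2, ht1⟩

end Aux

/-- Let `R` be a field and `f ∈ R[x]` an irreducible separable polynomial with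
residue field `K := R[x]/(f)`. Then for every `n ≥ 1` the algebra `A := R[x]/(f^n)` admits a
`K`-algebra structure (a lifting `K →ₐ[R] A` of the residue field) under which
`A ≅ K[x]/(x^n)` as `K`-algebras. -/
theorem stmt6 (R : Type*) [Field R] (f : Polynomial R) (hf : Irreducible f)
    (hsep : f.Separable) (n : ℕ) (hn : 1 ≤ n) :
    ∃ φ : (Polynomial R ⧸ Ideal.span {f}) →ₐ[R] (Polynomial R ⧸ Ideal.span {f ^ n}),
      (Ideal.Quotient.mk (Ideal.span {f ^ n})).comp (algebraMap R (Polynomial R)) =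
        (φ.toRingHom.comp ((Ideal.Quotient.mk (Ideal.span {f})).comp
          (algebraMap R (Polynomial R)))) ∧
      Nonempty (
        letI : Algebra (Polynomial R ⧸ Ideal.span {f}) (Polynomial R ⧸ Ideal.span {f ^ n}) :=
          φ.toRingHom.toAlgebra
        (Polynomial R ⧸ Ideal.span {f ^ n}) ≃ₐ[Polynomial R ⧸ Ideal.span {f}]
          (Polynomial (Polynomial R ⧸ Ideal.span {f}) ⧸
            Ideal.span {(Polynomial.X : Polynomial (Polynomial R ⧸ Ideal.span {f})) ^ n})) := by
  classical
  obtain ⟨α, hα0, hαX⟩ := stmt6_aux_root f hsep n hn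
  haveI : Fact (Irreducible f) := ⟨hf⟩
  haveI hmax : (Ideal.span {f}).IsMaximal := PrincipalIdealRing.isMaximal_of_irreducible hf
  refine ⟨AdjoinRoot.liftAlgHom f (Algebra.ofId R _) α hα0, ?_, ?_⟩
  · ext r
    exact ((AdjoinRoot.liftAlgHom f (Algebra.ofId R _) α hα0).commutes r).symm
  · -- the `K`-algebra isomorphism
    letI instKA : Algebra (Polynomial R ⧸ Ideal.span {f})
        (Polynomial R ⧸ Ideal.span {f ^ n}) :=
      (AdjoinRoot.liftAlgHom f (Algebra.ofId R _) α hα0).toRingHom.toAlgebra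
    haveI : IsScalarTower R (Polynomial R ⧸ Ideal.span {f})
        (Polynomial R ⧸ Ideal.span {f ^ n}) :=
      IsScalarTower.of_algebraMap_eq (R := R) (S := Polynomial R ⧸ Ideal.span {f})
        (A := Polynomial R ⧸ Ideal.span {f ^ n})
        fun r => ((AdjoinRoot.liftAlgHom f (Algebra.ofId R _) α hα0).commutes r).symm
    set β : Polynomial R ⧸ Ideal.span {f ^ n} :=
      (Ideal.Quotient.mk (Ideal.span {f ^ n})) X - α with hβ
    have hβn : β ^ n = 0 := by
      obtain ⟨c, hc⟩ := Ideal.mem_span_singleton'.mp hαX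
      have hfn0 : (Ideal.Quotient.mk (Ideal.span {f ^ n})) (f ^ n) = 0 := by
        rw [Ideal.Quotient.eq_zero_iff_mem]
        exact Ideal.mem_span_singleton_self _
      rw [← hc, mul_pow, ← _root_.map_pow, hfn0, mul_zero]
    have hker : ∀ p ∈ Ideal.span {(X : Polynomial (Polynomial R ⧸ Ideal.span {f})) ^ n},
        Polynomial.aeval β p = 0 := by
      intro p hp
      obtain ⟨q, rfl⟩ := (Ideal.mem_span_singleton (α := Polynomial (Polynomial R ⧸ Ideal.span {f}))).mp hp
      rw [_root_.map_mul, _root_.map_pow, Polynomial.aeval_X, hβn, zero_mul]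
    haveI : (Ideal.span {(X : Polynomial (Polynomial R ⧸ Ideal.span {f})) ^ n}).IsTwoSided :=
      ⟨fun b h => (Ideal.mem_span_singleton (α := Polynomial (Polynomial R ⧸ Ideal.span {f}))).mpr
        (dvd_mul_of_dvd_left ((Ideal.mem_span_singleton (α := Polynomial (Polynomial R ⧸ Ideal.span {f}))).mp h) b)⟩
    set Ψ : (Polynomial (Polynomial R ⧸ Ideal.span {f}) ⧸
          Ideal.span {(X : Polynomial (Polynomial R ⧸ Ideal.span {f})) ^ n})
        →ₐ[Polynomial R ⧸ Ideal.span {f}] (Polynomial R ⧸ Ideal.span {f ^ n}) :=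
      Ideal.Quotient.liftₐ _ (Polynomial.aeval β) hker with hΨ
    have hΨmk : ∀ q : Polynomial (Polynomial R ⧸ Ideal.span {f}),
        Ψ ((Ideal.Quotient.mk _) q) = Polynomial.aeval β q := by
      intro q
      rw [hΨ, Ideal.Quotient.liftₐ_apply]
      rfl
    have hmkaev : ∀ p : Polynomial R, (Ideal.Quotient.mk (Ideal.span {f ^ n})) p
        = Polynomial.aeval ((Ideal.Quotient.mk (Ideal.span {f ^ n})) X) p := by
      intro p
      have h := Polynomial.aeval_algHom_apply (Ideal.Quotient.mkₐ R (Ideal.span {f ^ n})) X p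
      simpa [Ideal.Quotient.mkₐ_eq_mk] using h.symm
    have hgen : Polynomial.aeval β
        (C ((Ideal.Quotient.mk (Ideal.span {f})) X) + X : Polynomial (Polynomial R ⧸ Ideal.span {f}))
        = (Ideal.Quotient.mk (Ideal.span {f ^ n})) X := by
      rw [_root_.map_add, Polynomial.aeval_C, Polynomial.aeval_X]
      have hφα : (algebraMap (Polynomial R ⧸ Ideal.span {f}) (Polynomial R ⧸ Ideal.span {f ^ n}))
          ((Ideal.Quotient.mk (Ideal.span {f})) X) = α := by
        show (AdjoinRoot.liftAlgHom f (Algebra.ofId R _) α hα0).toRingHom _ = α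
        exact AdjoinRoot.liftAlgHom_root (p := f) (i := Algebra.ofId R _) (x := α) (h := hα0)
      rw [hφα, hβ, add_sub_cancel]
    have hsurj : Function.Surjective Ψ := by
      intro a
      obtain ⟨p, rfl⟩ := Ideal.Quotient.mk_surjective a
      refine ⟨(Ideal.Quotient.mk _) (Polynomial.aeval
        (C ((Ideal.Quotient.mk (Ideal.span {f})) X) + X) p), ?_⟩
      rw [hΨmk]
      have h := Polynomial.aeval_algHom_apply
        (((Polynomial.aeval β).restrictScalars R :
          Polynomial (Polynomial R ⧸ Ideal.span {f}) →ₐ[R] (Polynomial R ⧸ Ideal.span {f ^ n})))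
        (C ((Ideal.Quotient.mk (Ideal.span {f})) X) + X) p
      simp only [AlgHom.coe_restrictScalars'] at h
      rw [← h, hgen, ← hmkaev]
    -- dimension count
    haveI : Module.Finite R (Polynomial R ⧸ Ideal.span {f}) :=
      Module.Finite.of_basis (AdjoinRoot.powerBasis hf.ne_zero).basis
    haveI : Module.Finite R (Polynomial R ⧸ Ideal.span {f ^ n}) :=
      Module.Finite.of_basis (AdjoinRoot.powerBasis (pow_ne_zero n hf.ne_zero)).basis
    letI : Field (Polynomial R ⧸ Ideal.span {f}) := Ideal.Quotient.field _
    haveI : Module.Finite (Polynomial R ⧸ Ideal.span {f}) (Polynomial R ⧸ Ideal.span {f ^ n}) :=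
      Module.Finite.of_restrictScalars_finite R _ _
    have hXnm : ((X : Polynomial (Polynomial R ⧸ Ideal.span {f})) ^ n).Monic :=
      Polynomial.monic_X_pow n
    haveI : Module.Finite (Polynomial R ⧸ Ideal.span {f})
        (Polynomial (Polynomial R ⧸ Ideal.span {f}) ⧸
          Ideal.span {(X : Polynomial (Polynomial R ⧸ Ideal.span {f})) ^ n}) :=
      Module.Finite.of_basis (AdjoinRoot.powerBasis' hXnm).basis
    have hrkK : Module.finrank R (Polynomial R ⧸ Ideal.span {f}) = f.natDegree :=
      (AdjoinRoot.powerBasis hf.ne_zero).finrank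
    have hrkA : Module.finrank R (Polynomial R ⧸ Ideal.span {f ^ n}) = n * f.natDegree := by
      have := (AdjoinRoot.powerBasis (pow_ne_zero n hf.ne_zero)).finrank
      rwa [show (AdjoinRoot.powerBasis (pow_ne_zero n hf.ne_zero)).dim = (f ^ n).natDegree from rfl,
        Polynomial.natDegree_pow] at this
    have hrkQ : Module.finrank (Polynomial R ⧸ Ideal.span {f})
        (Polynomial (Polynomial R ⧸ Ideal.span {f}) ⧸
          Ideal.span {(X : Polynomial (Polynomial R ⧸ Ideal.span {f})) ^ n}) = n := by
      have := (AdjoinRoot.powerBasis' hXnm).finrank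
      rwa [show (AdjoinRoot.powerBasis' hXnm).dim
          = ((X : Polynomial (Polynomial R ⧸ Ideal.span {f})) ^ n).natDegree from rfl,
        Polynomial.natDegree_X_pow] at this
    have htower := Module.finrank_mul_finrank R (Polynomial R ⧸ Ideal.span {f})
      (Polynomial R ⧸ Ideal.span {f ^ n})
    rw [hrkK, hrkA] at htower
    have hrkKA : Module.finrank (Polynomial R ⧸ Ideal.span {f})
        (Polynomial R ⧸ Ideal.span {f ^ n}) = n :=
      Nat.eq_of_mul_eq_mul_left hf.natDegree_pos (by rw [htower]; ring)
    have hinj : Function.Injective Ψ := by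
      have H : Module.finrank (Polynomial R ⧸ Ideal.span {f})
          (Polynomial (Polynomial R ⧸ Ideal.span {f}) ⧸
            Ideal.span {(X : Polynomial (Polynomial R ⧸ Ideal.span {f})) ^ n})
          = Module.finrank (Polynomial R ⧸ Ideal.span {f})
            (Polynomial R ⧸ Ideal.span {f ^ n}) := by rw [hrkQ, hrkKA]
      have hsurj' : Function.Surjective Ψ.toLinearMap := hsurj
      have hinj' : Function.Injective Ψ.toLinearMap :=
        (LinearMap.injective_iff_surjective_of_finrank_eq_finrank H).mpr hsurj'
      exact hinj'
    exact ⟨(AlgEquiv.ofBijective Ψ ⟨hinj, hsurj⟩).symm⟩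
end

section
/- Let R be a field, f(x) ∈ R[x] an irreducible polynomial of degree u, n ≥ 2, A := R[x]/(f(x)^n), and M(i) := R[x]/(f(x)^i). For 1 ≤ j < i ≤ n with h := i - j, the short exact sequence 0 → M(j) → M(i) → M(h) → 0 (with maps induced by multiplication by f(x)^h and by the canonical projection) remains exact after applying Hom_A(A ⊕ M(i), −). -/
set_option synthInstance.maxHeartbeats 1000000
set_option maxHeartbeats 2000000

/-- The local algebra `A := R[x]/(f^n)`. -/
abbrev QuotAlg (R : Type*) [Field R] (f : Polynomial R) (n : ℕ) : Type _ :=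
  Polynomial R ⧸ Ideal.span {f ^ n}

/-- The `A`-module `M(k) := A/(f̄^k) ≅ R[x]/(f^k)`. -/
abbrev QuotMod (R : Type*) [Field R] (f : Polynomial R) (n k : ℕ) : Type _ :=
  QuotAlg R f n ⧸ (Ideal.span {Ideal.Quotient.mk (Ideal.span {f ^ n}) f} ^ k)

/-- Let `R` be a field, `f ∈ R[x]` irreducible, `n ≥ 2`, `A := R[x]/(f^n)`,
`M(k) := A/(f̄^k)`. For `1 ≤ j < i ≤ n` and `h := i - j`, the short exact sequence
`0 → M(j) → M(i) → M(h) → 0`, with first map induced by multiplication by `f^(i-j)` and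
second map the canonical projection, stays exact after applying `Hom_A(A ⊕ M(i), −)`. -/
theorem stmt9 (R : Type*) [Field R] (f : Polynomial R) (hf : Irreducible f)
    (n : ℕ) (hn : 2 ≤ n) (i j : ℕ) (h1 : 1 ≤ j) (h2 : j < i) (h3 : i ≤ n)
    (φ : QuotMod R f n j →ₗ[QuotAlg R f n] QuotMod R f n i)
    (ψ : QuotMod R f n i →ₗ[QuotAlg R f n] QuotMod R f n (i - j))
    (hφ : ∀ a : QuotAlg R f n,
      φ (Ideal.Quotient.mk _ a) =
        Ideal.Quotient.mk _ ((Ideal.Quotient.mk (Ideal.span {f ^ n}) f) ^ (i - j) * a))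
    (hψ : ∀ a : QuotAlg R f n,
      ψ (Ideal.Quotient.mk _ a) = Ideal.Quotient.mk _ a) :
    Function.Injective
      (fun g : (QuotAlg R f n × QuotMod R f n i) →ₗ[QuotAlg R f n] QuotMod R f n j =>
        φ ∘ₗ g) ∧
    Function.Exact
      (fun g : (QuotAlg R f n × QuotMod R f n i) →ₗ[QuotAlg R f n] QuotMod R f n j =>
        φ ∘ₗ g)
      (fun g : (QuotAlg R f n × QuotMod R f n i) →ₗ[QuotAlg R f n] QuotMod R f n i =>
        ψ ∘ₗ g) ∧
    Function.Surjective
      (fun g : (QuotAlg R f n × QuotMod R f n i) →ₗ[QuotAlg R f n] QuotMod R f n i =>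
        ψ ∘ₗ g) := by
  have hfne : f ≠ 0 := hf.ne_zero
  set π : Polynomial R →+* QuotAlg R f n := Ideal.Quotient.mk (Ideal.span {f ^ n}) with hπ
  -- membership lemma
  have hmem : ∀ k : ℕ, k ≤ n → ∀ a : Polynomial R,
      (π a ∈ Ideal.span {π f} ^ k ↔ a ∈ Ideal.span {f ^ k}) := by
    intro k hk a
    rw [Ideal.span_singleton_pow, ← map_pow]
    have h1 : Ideal.span {π (f ^ k)} = Ideal.map π (Ideal.span {f ^ k}) := by
      rw [Ideal.map_span, Set.image_singleton]
    rw [h1, hπ, Ideal.mem_quotient_iff_mem_sup, sup_eq_left.mpr]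
    exact Ideal.span_singleton_le_span_singleton.mpr (pow_dvd_pow f hk)
  have hφinj : Function.Injective φ := by
    rw [← LinearMap.ker_eq_bot, LinearMap.ker_eq_bot']
    intro x hx
    obtain ⟨aa, rfl⟩ := Ideal.Quotient.mk_surjective x
    obtain ⟨a, rfl⟩ := Ideal.Quotient.mk_surjective aa
    rw [hφ] at hx
    rw [Ideal.Quotient.eq_zero_iff_mem] at hx ⊢
    rw [← map_pow, ← map_mul, hmem i h3, Ideal.mem_span_singleton] at hx
    obtain ⟨c, hc⟩ := hx
    rw [hmem j (le_trans h2.le h3), Ideal.mem_span_singleton]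
    refine ⟨c, ?_⟩
    apply mul_left_cancel₀ (pow_ne_zero (i - j) hfne)
    rw [hc, ← mul_assoc, ← pow_add]
    congr 2
    omega
  have hψsurj : Function.Surjective ψ := by
    intro y
    obtain ⟨a, rfl⟩ := Ideal.Quotient.mk_surjective y
    exact ⟨Ideal.Quotient.mk _ a, hψ a⟩
  have hcomp : ∀ x, ψ (φ x) = 0 := by
    intro x
    obtain ⟨a, rfl⟩ := Ideal.Quotient.mk_surjective x
    rw [hφ, hψ, Ideal.Quotient.eq_zero_iff_mem]
    refine Ideal.mul_mem_right _ _ ?_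
    rw [Ideal.span_singleton_pow]
    exact Ideal.mem_span_singleton_self _
  have hker : ∀ x, ψ x = 0 → ∃ y, φ y = x := by
    intro x hx
    obtain ⟨a, rfl⟩ := Ideal.Quotient.mk_surjective x
    rw [hψ, Ideal.Quotient.eq_zero_iff_mem, Ideal.span_singleton_pow,
      Ideal.mem_span_singleton] at hx
    obtain ⟨b, hb⟩ := hx
    exact ⟨Ideal.Quotient.mk _ b, by rw [hφ, ← hb]⟩
  refine ⟨?_, ?_, ?_⟩
  · intro g g' hgg'
    apply LinearMap.ext
    intro x
    exact hφinj (LinearMap.congr_fun hgg' x)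
  · intro g
    constructor
    · intro hg
      have hrange : ∀ x, g x ∈ LinearMap.range φ := fun x =>
        let ⟨y, hy⟩ := hker (g x) (LinearMap.congr_fun hg x)
        ⟨y, hy⟩
      refine ⟨(LinearEquiv.ofInjective φ hφinj).symm.toLinearMap ∘ₗ
        g.codRestrict (LinearMap.range φ) hrange, ?_⟩
      apply LinearMap.ext
      intro x
      simp only [LinearMap.comp_apply, LinearMap.codRestrict_apply, LinearEquiv.coe_coe,
        LinearEquiv.ofInjective_symm_apply]
    · rintro ⟨g', rfl⟩
      apply LinearMap.ext
      intro x
      exact hcomp (g' x)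
  · intro g
    obtain ⟨y₁, hy₁⟩ := hψsurj (g (1, 0))
    obtain ⟨y₂, hy₂⟩ := hψsurj (g (0, Ideal.Quotient.mk _ 1))
    have hann : (Ideal.span {π f} ^ i : Ideal (QuotAlg R f n)) ≤
        LinearMap.ker (LinearMap.toSpanSingleton (QuotAlg R f n) (QuotMod R f n i) y₂) := by
      intro a ha
      rw [LinearMap.mem_ker, LinearMap.toSpanSingleton_apply]
      obtain ⟨b, rfl⟩ := Submodule.Quotient.mk_surjective _ y₂
      rw [← Submodule.Quotient.mk_smul, Submodule.Quotient.mk_eq_zero, smul_eq_mul]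
      exact Ideal.mul_mem_right b _ ha
    set G₂ := Submodule.liftQ _ (LinearMap.toSpanSingleton (QuotAlg R f n) (QuotMod R f n i) y₂)
      hann with hG₂
    refine ⟨(LinearMap.toSpanSingleton (QuotAlg R f n) (QuotMod R f n i) y₁) ∘ₗ
      (LinearMap.fst _ _ _) + G₂ ∘ₗ (LinearMap.snd _ _ _), ?_⟩
    apply LinearMap.ext
    rintro ⟨a, m⟩
    obtain ⟨b, rfl⟩ := Submodule.Quotient.mk_surjective _ m
    simp only [LinearMap.comp_apply, LinearMap.add_apply, LinearMap.fst_apply,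
      LinearMap.snd_apply, LinearMap.toSpanSingleton_apply, map_add, hG₂,
      Submodule.liftQ_apply]
    rw [map_smul, map_smul, hy₁, hy₂, ← map_smul g, ← map_smul g, ← map_add g]
    congr 1
    refine Prod.ext ?_ ?_
    · simp
    · show a • (0 : QuotMod R f n i) + b • Submodule.Quotient.mk 1 = Submodule.Quotient.mk b
      rw [smul_zero, zero_add, ← Submodule.Quotient.mk_smul, smul_eq_mul, mul_one]
end

section
/- Let R be a field, f(x) ∈ R[x] irreducible, A := R[x]/(f(x)^n), and 1 ≤ j ≤ i ≤ n − 1. Set Λ := End_A(A ⊕ M(i)) where M(k) := R[x]/(f(x)^k). Then the endomorphism algebra of the Λ-module Hom_A(A ⊕ M(i), M(j)) is isomorphic as an R-algebra to End_A(M(j)) ≅ R[x]/(f(x)^j). -/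
set_option synthInstance.maxHeartbeats 1000000
set_option maxHeartbeats 2000000

/-- The endomorphism algebra of the `Λ`-module `Hom_A(A ⊕ M(i), M(j))`, where
`Λ := End_A(A ⊕ M(i))` acts on the Hom-space by (pre)composition: concretely, the
`R`-subalgebra of `End_R(Hom_A(A ⊕ M(i), M(j)))` of all operators commuting with
composition by every `A`-endomorphism `l` of `A ⊕ M(i)`. -/
noncomputable def endOverEnd (R : Type*) [Field R] (f : Polynomial R) (n i j : ℕ) :
    Subalgebra R (Module.End R
      ((QuotAlg R f n × QuotMod R f n i) →ₗ[QuotAlg R f n] QuotMod R f n j)) where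
  carrier := {Θ | ∀ (l : (QuotAlg R f n × QuotMod R f n i) →ₗ[QuotAlg R f n]
      (QuotAlg R f n × QuotMod R f n i))
      (g : (QuotAlg R f n × QuotMod R f n i) →ₗ[QuotAlg R f n] QuotMod R f n j),
      Θ (g ∘ₗ l) = Θ g ∘ₗ l}
  mul_mem' := by
    intro a b ha hb l g
    show a (b (g ∘ₗ l)) = a (b g) ∘ₗ l
    rw [hb l g, ha l (b g)]
  add_mem' := by
    intro a b ha hb l g
    show a (g ∘ₗ l) + b (g ∘ₗ l) = (a g + b g) ∘ₗ l
    rw [ha l g, hb l g, LinearMap.add_comp]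
  algebraMap_mem' := by
    intro r l g
    simp only [Module.algebraMap_end_apply, LinearMap.smul_comp]

section Aux

/-- For a commutative `A`-algebra `B` with surjective structure map, `End_A(B) ≅ B`. -/
noncomputable def endEquivSelf (R A B : Type*) [CommRing R] [CommRing A] [CommRing B]
    [Algebra R A] [Algebra R B] [Algebra A B] [IsScalarTower R A B]
    (hs : Function.Surjective (algebraMap A B)) :
    (Module.End A B) ≃ₐ[R] B := by
  refine (AlgEquiv.ofBijective ((Algebra.lmul A B).restrictScalars R) ⟨?_, ?_⟩).symm
  · intro b c h
    have := congrArg (fun φ => φ (1 : B)) h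
    simpa using this
  · intro φ
    refine ⟨φ 1, ?_⟩
    ext b
    obtain ⟨a, rfl⟩ := hs b
    have h1 : algebraMap A B a = a • (1 : B) := by
      rw [Algebra.smul_def, mul_one]
    have : φ (algebraMap A B a) = a • φ 1 := by rw [h1, map_smul]
    simp only [AlgHom.coe_restrictScalars', Algebra.lmul]
    show φ 1 * algebraMap A B a = φ (algebraMap A B a)
    rw [this, Algebra.smul_def, mul_comm]

variable (R : Type*) [Field R] (f : Polynomial R) (n i j : ℕ)

/-- Post-composition as an `R`-algebra map from `End_A(M(j))` to
`End_R(Hom_A(A ⊕ M(i), M(j)))`. -/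
noncomputable def compF :
    Module.End (QuotAlg R f n) (QuotMod R f n j) →ₐ[R]
      Module.End R ((QuotAlg R f n × QuotMod R f n i) →ₗ[QuotAlg R f n] QuotMod R f n j) where
  toFun φ :=
    { toFun := fun g => φ ∘ₗ g
      map_add' := fun g h => LinearMap.ext fun x => by simp
      map_smul' := fun r g => LinearMap.ext fun x => by simp }
  map_one' := LinearMap.ext fun g => LinearMap.ext fun x => rfl
  map_mul' := fun φ ψ => LinearMap.ext fun g => LinearMap.ext fun x => rfl
  map_zero' := LinearMap.ext fun g => LinearMap.ext fun x => by simp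
  map_add' := fun φ ψ => LinearMap.ext fun g => LinearMap.ext fun x => rfl
  commutes' := fun r => LinearMap.ext fun g => LinearMap.ext fun x => by
    simp [Module.algebraMap_end_apply]

lemma compF_mem (φ : Module.End (QuotAlg R f n) (QuotMod R f n j)) :
    compF R f n i j φ ∈ endOverEnd R f n i j := by
  intro l g
  show φ ∘ₗ (g ∘ₗ l) = (φ ∘ₗ g) ∘ₗ l
  rw [LinearMap.comp_assoc]

lemma compF_injective : Function.Injective (compF R f n i j) := by
  intro φ ψ h
  refine LinearMap.ext fun c => ?_
  obtain ⟨a, rfl⟩ := Ideal.Quotient.mk_surjective c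
  have := congrArg (fun Θ => Θ ((Algebra.linearMap (QuotAlg R f n) (QuotMod R f n j)) ∘ₗ
    (LinearMap.fst (QuotAlg R f n) (QuotAlg R f n) (QuotMod R f n i))) (a, 0)) h
  have h2 : φ (@algebraMap (QuotAlg R f n) (QuotMod R f n j) _ _ (Ideal.Quotient.algebra _) a)
      = ψ (@algebraMap (QuotAlg R f n) (QuotMod R f n j) _ _ (Ideal.Quotient.algebra _) a) := by
    simpa [compF] using this
  rwa [Ideal.Quotient.algebraMap_eq] at h2

lemma compF_surjective_onto (Θ : Module.End R
      ((QuotAlg R f n × QuotMod R f n i) →ₗ[QuotAlg R f n] QuotMod R f n j))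
    (hΘ : Θ ∈ endOverEnd R f n i j) : ∃ φ, compF R f n i j φ = Θ := by
  refine ⟨{ toFun := fun c => Θ ((LinearMap.toSpanSingleton (QuotAlg R f n) (QuotMod R f n j) c)
              ∘ₗ LinearMap.fst (QuotAlg R f n) (QuotAlg R f n) (QuotMod R f n i)) (1, 0)
            map_add' := ?_
            map_smul' := ?_ }, ?_⟩
  · intro c d
    have h1 : (LinearMap.toSpanSingleton (QuotAlg R f n) (QuotMod R f n j) (c + d))
          ∘ₗ LinearMap.fst (QuotAlg R f n) (QuotAlg R f n) (QuotMod R f n i)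
        = (LinearMap.toSpanSingleton (QuotAlg R f n) (QuotMod R f n j) c)
            ∘ₗ LinearMap.fst (QuotAlg R f n) (QuotAlg R f n) (QuotMod R f n i)
          + (LinearMap.toSpanSingleton (QuotAlg R f n) (QuotMod R f n j) d)
            ∘ₗ LinearMap.fst (QuotAlg R f n) (QuotAlg R f n) (QuotMod R f n i) := by
      refine LinearMap.ext fun x => ?_
      simp [LinearMap.toSpanSingleton_apply, smul_add]
    show Θ ((LinearMap.toSpanSingleton (QuotAlg R f n) (QuotMod R f n j) (c + d))
          ∘ₗ LinearMap.fst (QuotAlg R f n) (QuotAlg R f n) (QuotMod R f n i)) (1, 0)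
        = Θ ((LinearMap.toSpanSingleton (QuotAlg R f n) (QuotMod R f n j) c)
            ∘ₗ LinearMap.fst (QuotAlg R f n) (QuotAlg R f n) (QuotMod R f n i)) (1, 0)
          + Θ ((LinearMap.toSpanSingleton (QuotAlg R f n) (QuotMod R f n j) d)
            ∘ₗ LinearMap.fst (QuotAlg R f n) (QuotAlg R f n) (QuotMod R f n i)) (1, 0)
    rw [h1, map_add]
    rfl
  · intro a c
    have h1 : (LinearMap.toSpanSingleton (QuotAlg R f n) (QuotMod R f n j) (a • c))
          ∘ₗ LinearMap.fst (QuotAlg R f n) (QuotAlg R f n) (QuotMod R f n i)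
        = ((LinearMap.toSpanSingleton (QuotAlg R f n) (QuotMod R f n j) c)
            ∘ₗ LinearMap.fst (QuotAlg R f n) (QuotAlg R f n) (QuotMod R f n i))
            ∘ₗ (a • LinearMap.id) := by
      refine LinearMap.ext fun x => ?_
      simp only [LinearMap.comp_apply, LinearMap.toSpanSingleton_apply,
        LinearMap.smul_apply, LinearMap.id_apply, LinearMap.fst_apply, Prod.smul_fst]
      rw [show a • x.1 = a * x.1 from rfl, mul_comm]
      exact smul_smul x.1 a c
    show Θ ((LinearMap.toSpanSingleton (QuotAlg R f n) (QuotMod R f n j) (a • c))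
          ∘ₗ LinearMap.fst (QuotAlg R f n) (QuotAlg R f n) (QuotMod R f n i)) (1, 0)
        = a • Θ ((LinearMap.toSpanSingleton (QuotAlg R f n) (QuotMod R f n j) c)
            ∘ₗ LinearMap.fst (QuotAlg R f n) (QuotAlg R f n) (QuotMod R f n i)) (1, 0)
    rw [h1, hΘ, LinearMap.comp_apply, LinearMap.smul_apply, LinearMap.id_apply, map_smul]
  · refine LinearMap.ext fun g => LinearMap.ext fun x => ?_
    show Θ ((LinearMap.toSpanSingleton (QuotAlg R f n) (QuotMod R f n j) (g x))
        ∘ₗ LinearMap.fst (QuotAlg R f n) (QuotAlg R f n) (QuotMod R f n i)) (1, 0) = Θ g x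
    have h1 : (LinearMap.toSpanSingleton (QuotAlg R f n) (QuotMod R f n j) (g x))
          ∘ₗ LinearMap.fst (QuotAlg R f n) (QuotAlg R f n) (QuotMod R f n i)
        = g ∘ₗ ((LinearMap.toSpanSingleton (QuotAlg R f n)
              (QuotAlg R f n × QuotMod R f n i) x)
            ∘ₗ LinearMap.fst (QuotAlg R f n) (QuotAlg R f n) (QuotMod R f n i)) := by
      refine LinearMap.ext fun y => ?_
      simp [LinearMap.toSpanSingleton_apply]
    rw [h1, hΘ]
    simp [LinearMap.toSpanSingleton_apply]

/-- The ideal identification `(f̄)^j = image of (f^j)`. -/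
lemma pow_span_eq :
    (Ideal.span {Ideal.Quotient.mk (Ideal.span {f ^ n}) f} ^ j : Ideal (QuotAlg R f n))
      = (Ideal.span {f ^ j}).map (Ideal.Quotient.mkₐ R (Ideal.span {f ^ n})) := by
  rw [Ideal.span_singleton_pow, Ideal.map_span, Set.image_singleton]
  congr 1

/-- `M(j) ≅ R[x]/(f^j)` as `R`-algebras, when `j ≤ n`. -/
noncomputable def quotModEquiv (hjn : j ≤ n) :
    QuotMod R f n j ≃ₐ[R] (Polynomial R ⧸ Ideal.span {f ^ j}) := by
  refine (Ideal.quotientEquivAlgOfEq R (pow_span_eq R f n j)).trans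
    ((DoubleQuot.quotQuotEquivQuotSupₐ R (Ideal.span {f ^ n}) (Ideal.span {f ^ j})).trans
      (Ideal.quotientEquivAlgOfEq R ?_))
  rw [sup_eq_right]
  exact Ideal.span_singleton_le_span_singleton.mpr (pow_dvd_pow f hjn)

end Aux

/-- Let `R` be a field, `f ∈ R[x]` irreducible, `A := R[x]/(f^n)`,
`1 ≤ j ≤ i ≤ n - 1`, and `Λ := End_A(A ⊕ M(i))`. Then the endomorphism algebra of the
`Λ`-module `Hom_A(A ⊕ M(i), M(j))` is isomorphic as an `R`-algebra to
`End_A(M(j)) ≅ R[x]/(f^j)`. -/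
theorem stmt10 (R : Type*) [Field R] (f : Polynomial R) (hf : Irreducible f)
    (n i j : ℕ) (h1 : 1 ≤ j) (h2 : j ≤ i) (h3 : i ≤ n - 1) :
    Nonempty ((endOverEnd R f n i j) ≃ₐ[R] (Polynomial R ⧸ Ideal.span {f ^ j})) ∧
    Nonempty ((Module.End (QuotAlg R f n) (QuotMod R f n j)) ≃ₐ[R]
      (Polynomial R ⧸ Ideal.span {f ^ j})) := by
  have hjn : j ≤ n := le_trans (le_trans h2 h3) (Nat.sub_le n 1)
  have hs : Function.Surjective (@algebraMap (QuotAlg R f n) (QuotMod R f n j) _ _ (Ideal.Quotient.algebra _)) := by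
    rw [Ideal.Quotient.algebraMap_eq]
    exact Ideal.Quotient.mk_surjective
  have e2 : (Module.End (QuotAlg R f n) (QuotMod R f n j)) ≃ₐ[R]
      (Polynomial R ⧸ Ideal.span {f ^ j}) :=
    (endEquivSelf R (QuotAlg R f n) (QuotMod R f n j) hs).trans (quotModEquiv R f n j hjn)
  refine ⟨⟨?_⟩, ⟨e2⟩⟩
  have hbij : Function.Bijective
      ((compF R f n i j).codRestrict (endOverEnd R f n i j) (compF_mem R f n i j)) := by
    constructor
    · intro φ ψ h
      exact compF_injective R f n i j (congrArg Subtype.val h)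
    · rintro ⟨Θ, hΘ⟩
      obtain ⟨φ, hφ⟩ := compF_surjective_onto R f n i j Θ hΘ
      exact ⟨φ, Subtype.ext hφ⟩
  exact ((AlgEquiv.ofBijective _ hbij).symm).trans e2
end

section
/- Let R be a field, f(x) ∈ R[x] irreducible, n ≥ 1, A := R[x]/(f(x)^n), and M a generator for the category of finitely generated A-modules (i.e., A ∈ add(M)). Then Λ := End_A(M) is isomorphic to its opposite algebra Λ^op as R-algebras. -/
open Ideal

section Core
variable {R₀ S : Type*} [CommRing R₀] [CommRing S] [IsDomain S] [Algebra R₀ S]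
  {ι : Type*} [Fintype ι] [DecidableEq ι]

theorem core_anti (q c : ι → S) (F : S) (hF : F ≠ 0) (hqc : ∀ i, q i * c i = F) :
    Nonempty ((Module.End S (∀ i, S ⧸ Ideal.span {q i})) ≃ₐ[R₀]
      (Module.End S (∀ i, S ⧸ Ideal.span {q i}))ᵐᵒᵖ) := by
  set A := S ⧸ Ideal.span {F} with hA
  set N := ∀ i, S ⧸ Ideal.span {q i} with hN
  have hc0 : ∀ i, c i ≠ 0 := by
    intro i h
    apply hF; rw [← hqc i, h, mul_zero]
  have hq0 : ∀ i, q i ≠ 0 := by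
    intro i h
    apply hF; rw [← hqc i, h, zero_mul]
  -- component maps
  have hker : ∀ i, Ideal.span {q i} ≤ LinearMap.ker
      (c i • (Ideal.span {F}).mkQ) := by
    intro i x hx
    rw [Ideal.mem_span_singleton] at hx
    obtain ⟨t, rfl⟩ := hx
    simp only [LinearMap.mem_ker, LinearMap.smul_apply, Submodule.mkQ_apply]
    rw [← Submodule.Quotient.mk_smul]
    rw [Submodule.Quotient.mk_eq_zero]
    rw [Ideal.mem_span_singleton]
    exact ⟨t, by rw [smul_eq_mul, ← hqc i]; ring⟩
  set Q : ∀ i, (S ⧸ Ideal.span {q i}) →ₗ[S] A :=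
    fun i => Submodule.liftQ _ (c i • (Ideal.span {F}).mkQ) (hker i) with hQdef
  have hQ : ∀ i (s : S), Q i (Ideal.Quotient.mk _ s) = Ideal.Quotient.mk _ (c i * s) := by
    intro i s
    show Q i (Submodule.Quotient.mk s) = _
    rw [hQdef]
    rw [Submodule.liftQ_apply]
    simp only [LinearMap.smul_apply, Submodule.mkQ_apply]
    rw [← Submodule.Quotient.mk_smul, smul_eq_mul]
    rfl
  have hQinj : ∀ i (x : S ⧸ Ideal.span {q i}), Q i x = 0 → x = 0 := by
    intro i x hx
    obtain ⟨s, rfl⟩ := Ideal.Quotient.mk_surjective x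
    rw [hQ] at hx
    rw [Ideal.Quotient.eq_zero_iff_mem, Ideal.mem_span_singleton] at hx ⊢
    have : c i * q i ∣ c i * s := by rw [mul_comm (c i) (q i), hqc i]; exact hx
    exact (mul_dvd_mul_iff_left (hc0 i)).mp this
  -- smul-mul helper in quotient rings
  have hsm : ∀ (I : Ideal S) (s : S) (x y : S ⧸ I), (s • x) * y = s • (x * y) := by
    intro I s x y
    obtain ⟨t, rfl⟩ := Ideal.Quotient.mk_surjective x
    obtain ⟨u, rfl⟩ := Ideal.Quotient.mk_surjective y
    show (Ideal.Quotient.mk I (s * t)) * _ = Ideal.Quotient.mk I (s * (t*u))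
    rw [← _root_.map_mul, mul_assoc]
  -- the bilinear form
  set B : N →ₗ[S] N →ₗ[S] A := LinearMap.mk₂ S (fun x y => ∑ i, Q i (x i * y i))
    (by intro m₁ m₂ nn; rw [← Finset.sum_add_distrib]
        exact Finset.sum_congr rfl fun i _ => by rw [Pi.add_apply, add_mul, map_add])
    (by intro s m nn; rw [Finset.smul_sum]
        exact Finset.sum_congr rfl fun i _ => by rw [Pi.smul_apply, hsm, map_smul])
    (by intro m n₁ n₂; rw [← Finset.sum_add_distrib]
        exact Finset.sum_congr rfl fun i _ => by rw [Pi.add_apply, mul_add, map_add])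
    (by intro s m nn; rw [Finset.smul_sum]
        exact Finset.sum_congr rfl fun i _ => by
          rw [Pi.smul_apply, mul_comm, hsm, mul_comm, map_smul]) with hB
  have hBapp : ∀ x y, B x y = ∑ i, Q i (x i * y i) := fun x y => rfl
  have hBsymm : ∀ x y, B x y = B y x := by
    intro x y; rw [hBapp, hBapp]
    exact Finset.sum_congr rfl fun i _ => by rw [mul_comm]
  have hBsingle : ∀ (x : N) (i : ι) (y : S ⧸ Ideal.span {q i}),
      B x (Pi.single i y) = Q i (x i * y) := by
    intro x i y
    rw [hBapp]
    rw [Finset.sum_eq_single i]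
    · rw [Pi.single_eq_same]
    · intro j _ hj; rw [Pi.single_eq_of_ne hj, mul_zero, map_zero]
    · intro h; exact absurd (Finset.mem_univ i) h
  -- nondegeneracy
  have hBinj : ∀ x : N, (∀ y, B x y = 0) → x = 0 := by
    intro x hx
    funext i
    have := hx (Pi.single i 1)
    rw [hBsingle, mul_one] at this
    exact hQinj i _ this
  -- surjectivity of x ↦ B x
  have hBsurj : ∀ g : N →ₗ[S] A, ∃ x : N, B x = g := by
    intro g
    have key : ∀ i, ∃ xi : S ⧸ Ideal.span {q i},
        ∀ y, Q i (xi * y) = g (Pi.single i y) := by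
      intro i
      have hone : (q i) • (1 : S ⧸ Ideal.span {q i}) = 0 := by
        have h1 : (q i) • (1 : S ⧸ Ideal.span {q i})
            = Ideal.Quotient.mk (Ideal.span {q i}) (q i * 1) := rfl
        rw [h1, Ideal.Quotient.eq_zero_iff_mem, Ideal.mem_span_singleton]
        exact ⟨1, rfl⟩
      have h1 : q i • g (Pi.single i (1 : S ⧸ Ideal.span {q i})) = 0 := by
        rw [← map_smul, ← Pi.single_smul, hone, Pi.single_zero, map_zero]
      obtain ⟨a, ha⟩ := Ideal.Quotient.mk_surjective (g (Pi.single i 1))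
      have h2 : F ∣ q i * a := by
        rw [← Ideal.mem_span_singleton, ← Ideal.Quotient.eq_zero_iff_mem]
        have h3 : Ideal.Quotient.mk (Ideal.span {F}) (q i * a)
            = q i • Ideal.Quotient.mk (Ideal.span {F}) a := rfl
        rw [h3, ha, h1]
      have h3 : c i ∣ a := by
        obtain ⟨t, ht⟩ := h2
        refine ⟨t, ?_⟩
        have h4 : q i * a = q i * (c i * t) := by rw [ht, ← hqc i]; ring
        exact mul_left_cancel₀ (hq0 i) h4
      obtain ⟨d, hd⟩ := h3
      refine ⟨Ideal.Quotient.mk _ d, ?_⟩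
      intro y
      obtain ⟨u, rfl⟩ := Ideal.Quotient.mk_surjective y
      have e1 : (Ideal.Quotient.mk (Ideal.span {q i}) d) * (Ideal.Quotient.mk (Ideal.span {q i}) u)
          = u • (Ideal.Quotient.mk (Ideal.span {q i}) d) := by
        rw [← _root_.map_mul]
        show Ideal.Quotient.mk _ (d * u) = Ideal.Quotient.mk _ (u * d)
        rw [mul_comm]
      have e2 : Pi.single (M := fun j => S ⧸ Ideal.span {q j}) i
            (Ideal.Quotient.mk (Ideal.span {q i}) u)
          = u • Pi.single (M := fun j => S ⧸ Ideal.span {q j}) i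
            (Ideal.Quotient.mk (Ideal.span {q i}) (1:S)) := by
        rw [← Pi.single_smul]
        have e3 : u • (Ideal.Quotient.mk (Ideal.span {q i}) (1:S))
            = Ideal.Quotient.mk (Ideal.span {q i}) u := by
          show Ideal.Quotient.mk _ (u * 1) = _
          rw [mul_one]
        rw [e3]
      rw [e1, map_smul, hQ, ← hd, e2, map_smul]
      congr 1
    choose x hx using key
    refine ⟨x, ?_⟩
    apply LinearMap.pi_ext'
    intro i
    apply LinearMap.ext
    intro y
    simp only [LinearMap.comp_apply, LinearMap.coe_single]
    rw [hBsingle]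
    exact hx i y
  -- β equivalence
  have hBbij : Function.Bijective B := by
    constructor
    · intro x y hxy
      have h1 : ∀ z, B (x - y) z = 0 := by
        intro z; rw [map_sub, LinearMap.sub_apply, hxy, sub_self]
      have h2 := hBinj _ h1
      rwa [sub_eq_zero] at h2
    · exact hBsurj
  set β := LinearEquiv.ofBijective B hBbij with hβ
  set Φ₀ : Module.End S N → Module.End S N :=
    fun φ => β.symm.toLinearMap ∘ₗ (LinearMap.lcomp S A φ) ∘ₗ β.toLinearMap with hΦ₀
  have hadj : ∀ (φ : Module.End S N) (x y : N), B (Φ₀ φ x) y = B x (φ y) := by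
    intro φ x y
    show (β (Φ₀ φ x)) y = _
    rw [hΦ₀]
    simp only [LinearMap.comp_apply, LinearEquiv.coe_coe, LinearEquiv.apply_symm_apply]
    rfl
  have huniq : ∀ z z' : N, (∀ y, B z y = B z' y) → z = z' := by
    intro z z' h
    have h1 : ∀ y, B (z - z') y = 0 := by
      intro y; rw [map_sub, LinearMap.sub_apply, h, sub_self]
    have h2 := hBinj _ h1
    rwa [sub_eq_zero] at h2
  have hΦmul : ∀ φ ψ : Module.End S N, Φ₀ (φ * ψ) = Φ₀ ψ * Φ₀ φ := by
    intro φ ψ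
    apply LinearMap.ext; intro x
    apply huniq; intro y
    simp only [Module.End.mul_apply, hadj]
  have hΦone : Φ₀ 1 = 1 := by
    apply LinearMap.ext; intro x
    apply huniq; intro y
    simp only [hadj, Module.End.one_apply]
  have hΦadd : ∀ φ ψ : Module.End S N, Φ₀ (φ + ψ) = Φ₀ φ + Φ₀ ψ := by
    intro φ ψ
    apply LinearMap.ext; intro x
    apply huniq; intro y
    simp only [LinearMap.add_apply, map_add, hadj]
  have hΦinv : ∀ φ : Module.End S N, Φ₀ (Φ₀ φ) = φ := by
    intro φ
    apply LinearMap.ext; intro x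
    apply huniq; intro y
    rw [hadj, hBsymm, hadj, hBsymm]
  have hΦalg : ∀ r : R₀, Φ₀ (algebraMap R₀ (Module.End S N) r) = algebraMap R₀ (Module.End S N) r := by
    intro r
    apply LinearMap.ext; intro x
    apply huniq; intro y
    simp only [hadj, Module.algebraMap_end_apply]
    rw [← algebraMap_smul S r y, ← algebraMap_smul S r x, map_smul, map_smul,
      LinearMap.smul_apply]
  exact ⟨{ toFun := fun φ => MulOpposite.op (Φ₀ φ)
           invFun := fun φ => Φ₀ φ.unop
           left_inv := fun φ => by simp only [MulOpposite.unop_op, hΦinv]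
           right_inv := fun φ => by simp only [hΦinv, MulOpposite.op_unop]
           map_mul' := fun φ ψ => by
             show MulOpposite.op (Φ₀ (φ * ψ)) = MulOpposite.op (Φ₀ φ) * MulOpposite.op (Φ₀ ψ)
             rw [hΦmul, ← MulOpposite.op_mul]
           map_add' := fun φ ψ => by
             show MulOpposite.op (Φ₀ (φ + ψ)) = MulOpposite.op (Φ₀ φ) + MulOpposite.op (Φ₀ ψ)
             rw [hΦadd, ← MulOpposite.op_add]
           commutes' := fun r => by
             show MulOpposite.op (Φ₀ (algebraMap R₀ (Module.End S N) r)) = _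
             rw [hΦalg]
             rfl }⟩

end Core

section Main
variable {R : Type*} [CommRing R] {S : Type*} [CommRing S] [IsDomain S]
  [IsPrincipalIdealRing S] [Algebra R S]

theorem stmt_aux (F : S) (hF0 : F ≠ 0) (M : Type*) [AddCommGroup M]
    [Module (S ⧸ Ideal.span {F}) M] [Module R M]
    [IsScalarTower R (S ⧸ Ideal.span {F}) M]
    [Module.Finite (S ⧸ Ideal.span {F}) M] :
    Nonempty ((Module.End (S ⧸ Ideal.span {F}) M) ≃ₐ[R]
      (Module.End (S ⧸ Ideal.span {F}) M)ᵐᵒᵖ) := by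
  classical
  letI : Module S M := Module.compHom M (Ideal.Quotient.mk (Ideal.span {F}))
  have hsmul : ∀ (s : S) (m : M), s • m = (Ideal.Quotient.mk (Ideal.span {F}) s) • m := fun _ _ => rfl
  haveI : IsScalarTower S (S ⧸ Ideal.span {F}) M := by
    constructor
    intro s a m
    obtain ⟨t, rfl⟩ := Ideal.Quotient.mk_surjective a
    have h1 : s • Ideal.Quotient.mk (Ideal.span {F}) t
        = Ideal.Quotient.mk (Ideal.span {F}) s * Ideal.Quotient.mk (Ideal.span {F}) t := rfl
    rw [h1, mul_smul]
    rfl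
  have halg : ∀ r : R, (algebraMap R (S ⧸ Ideal.span {F})) r
      = Ideal.Quotient.mk (Ideal.span {F}) (algebraMap R S r) :=
    fun r => IsScalarTower.algebraMap_apply R S (S ⧸ Ideal.span {F}) r ▸ rfl
  haveI : IsScalarTower R S M := by
    constructor
    intro r s m
    rw [hsmul, hsmul]
    have h1 : r • s = algebraMap R S r * s := Algebra.smul_def r s
    rw [h1, _root_.map_mul, mul_smul, ← halg, algebraMap_smul]
  haveI : SMulCommClass S R M := by
    constructor
    intro s r m
    rw [hsmul, hsmul, ← algebraMap_smul (S ⧸ Ideal.span {F}) r m,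
      ← algebraMap_smul (S ⧸ Ideal.span {F}) r
        ((Ideal.Quotient.mk (Ideal.span {F}) s) • m), smul_smul, smul_smul, mul_comm]
  haveI : Module.Finite S M := Module.Finite.trans (S ⧸ Ideal.span {F}) M
  -- every element of M is killed by F
  have hkill : ∀ m : M, F • m = 0 := by
    intro m
    have h1 : Ideal.Quotient.mk (Ideal.span {F}) F = 0 :=
      Ideal.Quotient.eq_zero_iff_mem.mpr (Ideal.mem_span_singleton.mpr dvd_rfl)
    rw [hsmul, h1, zero_smul]
  have htors : Module.IsTorsion S M := by
    intro m
    exact ⟨⟨F, mem_nonZeroDivisors_of_ne_zero hF0⟩, hkill m⟩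
  -- shrink M to the universe of S
  obtain ⟨k, π, hπ⟩ := Module.Finite.exists_fin' S M
  let M' := (Fin k → S) ⧸ LinearMap.ker π
  let eM : M' ≃ₗ[S] M := π.quotKerEquivOfSurjective hπ
  haveI : Module.Finite S M' := Module.Finite.equiv eM.symm
  have htors' : Module.IsTorsion S M' := by
    intro x
    obtain ⟨a, ha⟩ := @htors (eM x)
    refine ⟨a, eM.injective ?_⟩
    rw [Submonoid.smul_def, map_smul, ← Submonoid.smul_def, ha, map_zero]
  obtain ⟨ι, hfin, p, hp, e, ⟨dM⟩⟩ := Module.equiv_directSum_of_isTorsion htors'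
  haveI := hfin
  set q : ι → S := fun i => p i ^ e i with hq
  let eN : M ≃ₗ[S] (∀ i, S ⧸ Ideal.span {q i}) :=
    (eM.symm.trans dM).trans (DirectSum.linearEquivFunOnFintype S ι
      (fun i => S ⧸ Ideal.span {q i}))
  set N := ∀ i, S ⧸ Ideal.span {q i} with hN
  -- divisibility
  have hdvd : ∀ i, ∃ ci, q i * ci = F := by
    intro i
    have h0 : F • (Pi.single (M := fun j => S ⧸ Ideal.span {q j}) i
        (Ideal.Quotient.mk (Ideal.span {q i}) 1)) = 0 := by
      have h3 := hkill (eN.symm (Pi.single i (Ideal.Quotient.mk (Ideal.span {q i}) 1)))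
      have h2 := congrArg eN h3
      rw [map_smul, LinearEquiv.apply_symm_apply, map_zero] at h2
      exact h2
    have h1 := congrFun h0 i
    rw [Pi.smul_apply, Pi.single_eq_same, Pi.zero_apply] at h1
    have h2 : F • Ideal.Quotient.mk (Ideal.span {q i}) 1
        = Ideal.Quotient.mk (Ideal.span {q i}) (F * 1) := rfl
    rw [h2, mul_one, Ideal.Quotient.eq_zero_iff_mem, Ideal.mem_span_singleton] at h1
    obtain ⟨ci, hci⟩ := h1
    exact ⟨ci, hci.symm⟩
  choose cc hcc using hdvd
  obtain ⟨Φ⟩ := core_anti (R₀ := R) q cc F hF0 hcc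
  -- End over the quotient ring equals End over S
  let E1 : Module.End (S ⧸ Ideal.span {F}) M ≃ₐ[R] Module.End S M :=
    { toFun := fun φ =>
        { toAddHom := φ.toAddHom
          map_smul' := fun s x => φ.map_smul (Ideal.Quotient.mk (Ideal.span {F}) s) x }
      invFun := fun ψ =>
        { toAddHom := ψ.toAddHom
          map_smul' := fun a x => by
            obtain ⟨s, rfl⟩ := Ideal.Quotient.mk_surjective a
            exact ψ.map_smul s x }
      left_inv := fun φ => rfl
      right_inv := fun ψ => rfl
      map_mul' := fun _ _ => rfl
      map_add' := fun _ _ => rfl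
      commutes' := fun r => rfl }
  -- conjugation by eN
  let E2 : Module.End S M ≃ₐ[R] Module.End S N :=
    { toFun := fun φ => eN.conj φ
      invFun := fun ψ => eN.symm.conj ψ
      left_inv := fun φ => by
        apply LinearMap.ext; intro x
        simp [LinearEquiv.conj_apply]
      right_inv := fun ψ => by
        apply LinearMap.ext; intro x
        simp [LinearEquiv.conj_apply]
      map_mul' := fun φ ψ => by
        apply LinearMap.ext; intro x
        simp [LinearEquiv.conj_apply, Module.End.mul_apply]
      map_add' := fun φ ψ => by
        apply LinearMap.ext; intro x
        simp [LinearEquiv.conj_apply]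
      commutes' := fun r => by
        apply LinearMap.ext; intro x
        simp only [LinearEquiv.conj_apply, LinearMap.comp_apply, LinearEquiv.coe_coe,
          Module.algebraMap_end_apply]
        rw [← algebraMap_smul S r (eN.symm x), map_smul, algebraMap_smul,
          LinearEquiv.apply_symm_apply]
        rfl }
  let E := E1.trans E2
  exact ⟨(E.trans Φ).trans (AlgEquiv.op E.symm)⟩

end Main

set_option synthInstance.maxHeartbeats 400000

/-- Let `R` be a field, `f ∈ R[x]` irreducible, `n ≥ 1`, `A := R[x]/(f^n)`, and
`M` a finitely generated generator for `A`-mod (i.e. some power of `M` maps onto `A`,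
equivalently `A ∈ add M`). Then `Λ := End_A(M)` is isomorphic to its opposite algebra as an
`R`-algebra. -/
theorem stmt11 (R : Type*) [Field R] (f : Polynomial R) (hf : Irreducible f)
    (n : ℕ) (hn : 1 ≤ n)
    (M : Type*) [AddCommGroup M] [Module (Polynomial R ⧸ Ideal.span {f ^ n}) M]
    [Module R M] [IsScalarTower R (Polynomial R ⧸ Ideal.span {f ^ n}) M]
    [Module.Finite (Polynomial R ⧸ Ideal.span {f ^ n}) M]
    (hgen : ∃ (k : ℕ) (g : (Fin k → M) →ₗ[Polynomial R ⧸ Ideal.span {f ^ n}]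
      (Polynomial R ⧸ Ideal.span {f ^ n})), Function.Surjective g) :
    Nonempty ((Module.End (Polynomial R ⧸ Ideal.span {f ^ n}) M) ≃ₐ[R]
      (Module.End (Polynomial R ⧸ Ideal.span {f ^ n}) M)ᵐᵒᵖ) :=
  stmt_aux (f ^ n) (pow_ne_zero n hf.ne_zero) M
end

section
/- Let R be a field, f(x) ∈ R[x] irreducible, n ≥ 2, A := R[x]/(f(x)^n), M a generator for A-mod, and Λ := End_A(M). Then no simple Λ-module is projective, and no simple Λ-module is injective. -/
set_option synthInstance.maxHeartbeats 400000
set_option maxHeartbeats 1000000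
open Submodule MulOpposite
open Submodule

section GeneralLemmas
variable {Γ : Type*} [Ring Γ]

/-- A central nilpotent element kills every simple module. -/
theorem central_nilpotent_kills {T : Type*} [AddCommGroup T] [Module Γ T]
    (hT : IsSimpleModule Γ T) {z : Γ} (hz : ∀ a : Γ, z * a = a * z)
    {m : ℕ} (hm : z ^ m = 0) (t : T) : z • t = 0 := by
  by_contra hne
  -- the action of z is a Γ-linear endomorphism
  let lz : T →ₗ[Γ] T :=
    { toFun := fun x => z • x
      map_add' := fun x y => smul_add z x y
      map_smul' := fun a x => by
        simp only [RingHom.id_apply, ← mul_smul, hz a] }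
  have hrange : LinearMap.range lz ≠ ⊥ := by
    intro h
    apply hne
    have : lz t ∈ LinearMap.range lz := ⟨t, rfl⟩
    rw [h] at this
    exact (by simpa using this : lz t = 0)
  have htop : LinearMap.range lz = ⊤ := (hT.1.2 _).resolve_left hrange
  have hsurj : Function.Surjective lz := LinearMap.range_eq_top.mp htop
  -- then z^j is surjective for all j
  have hiter : ∀ j : ℕ, ∀ x : T, ∃ y : T, z ^ j • y = x := by
    intro j
    induction j with
    | zero => intro x; exact ⟨x, by simp⟩
    | succ j ih =>
      intro x
      obtain ⟨y, hy⟩ := hsurj x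
      obtain ⟨u, hu⟩ := ih y
      exact ⟨u, by rw [pow_succ', mul_smul, hu]; exact hy⟩
  haveI : Nontrivial T := IsSimpleModule.nontrivial Γ T
  obtain ⟨t0, ht0⟩ : ∃ x : T, x ≠ 0 := exists_ne (0 : T)
  obtain ⟨y, hy⟩ := hiter m t0
  rw [hm, zero_smul] at hy
  exact ht0 hy.symm

/-- From a simple projective module we get a nonzero idempotent with simple
principal left ideal. -/
theorem exists_idempotent_of_simple_projective {T : Type*} [AddCommGroup T] [Module Γ T]
    (hT : IsSimpleModule Γ T) (hP : Module.Projective Γ T) :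
    ∃ e : Γ, e * e = e ∧ e ≠ 0 ∧ IsSimpleModule Γ (span Γ ({e} : Set Γ)) := by
  haveI : Nontrivial T := IsSimpleModule.nontrivial Γ T
  obtain ⟨t₀, ht₀⟩ : ∃ x : T, x ≠ 0 := exists_ne 0
  set q : Γ →ₗ[Γ] T := LinearMap.toSpanSingleton Γ T t₀ with hq
  have hqsurj : Function.Surjective q := by
    rw [← LinearMap.range_eq_top, ← LinearMap.span_singleton_eq_range]
    rcases (hT.1.2 (span Γ {t₀})) with h | h
    · exfalso; apply ht₀
      have : t₀ ∈ span Γ ({t₀} : Set T) := mem_span_singleton_self t₀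
      rw [h] at this; simpa using this
    · exact h
  obtain ⟨σ, hσ⟩ := Module.projective_lifting_property q LinearMap.id hqsurj
  have hσq : ∀ x : T, q (σ x) = x := fun x => by
    have := congrArg (fun φ => φ x) hσ; simpa using this
  set e : Γ := σ t₀ with he
  have hqe : q e = t₀ := hσq t₀
  have het₀ : e • t₀ = t₀ := hqe
  have hee : e * e = e := by
    have : e * e = e • e := rfl
    rw [this, he, ← map_smul, het₀]
  have hene : e ≠ 0 := by
    intro h
    apply ht₀
    rw [← hqe, h, map_zero]
  refine ⟨e, hee, hene, ?_⟩
  -- span {e} ≃ T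
  have hσ_mem : ∀ x : T, σ x ∈ span Γ ({e} : Set Γ) := by
    intro x
    rw [mem_span_singleton]
    refine ⟨σ x, ?_⟩
    have : σ x • e = σ (σ x • t₀) := (map_smul σ (σ x) t₀).symm
    rw [this]
    have : σ x • t₀ = q (σ x) := rfl
    rw [this, hσq]
  let φ : T →ₗ[Γ] span Γ ({e} : Set Γ) :=
    { toFun := fun x => ⟨σ x, hσ_mem x⟩
      map_add' := fun x y => by ext; simp
      map_smul' := fun a x => by ext; simp }
  let ψ : span Γ ({e} : Set Γ) →ₗ[Γ] T := q.comp (Submodule.subtype _)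
  have hψφ : ∀ x : T, ψ (φ x) = x := fun x => hσq x
  have hφψ : ∀ y : span Γ ({e} : Set Γ), φ (ψ y) = y := by
    rintro ⟨y, hy⟩
    rw [mem_span_singleton] at hy
    obtain ⟨a, ha⟩ := hy
    ext
    show σ (q y) = y
    subst ha
    have h1 : q (a • e) = a • t₀ := by
      show (a • e) • t₀ = a • t₀
      rw [smul_assoc, het₀]
    rw [h1, map_smul]
  have equiv : (span Γ ({e} : Set Γ)) ≃ₗ[Γ] T :=
    { toFun := ψ
      map_add' := ψ.map_add
      map_smul' := ψ.map_smul
      invFun := φ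
      left_inv := hφψ
      right_inv := hψφ }
  haveI := hT
  exact IsSimpleModule.congr equiv

end GeneralLemmas

section Core
variable {A₀ : Type*} [CommRing A₀]

/-- A nonzero map between `c₀`-torsion modules hitting a given nonzero vector. -/
theorem exists_torsion_hom (c₀ : A₀) (hmax : (Ideal.span ({c₀} : Set A₀)).IsMaximal)
    {V W : Type*} [AddCommGroup V] [Module A₀ V] [AddCommGroup W] [Module A₀ W]
    (hV : ∀ v : V, c₀ • v = 0) (hW : ∀ w : W, c₀ • w = 0)
    (x : V) (hx : x ≠ 0) (w₀ : W) (hw₀ : w₀ ≠ 0) :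
    ∃ h : V →ₗ[A₀] W, h x ≠ 0 := by
  set I : Ideal A₀ := Ideal.span ({c₀} : Set A₀) with hI
  haveI : I.IsMaximal := hmax
  letI kField : Field (A₀ ⧸ I) := Ideal.Quotient.field I
  have htV : Module.IsTorsionBySet A₀ V I :=
    (Module.isTorsionBySet_span_singleton_iff c₀).mpr hV
  have htW : Module.IsTorsionBySet A₀ W I :=
    (Module.isTorsionBySet_span_singleton_iff c₀).mpr hW
  letI mV : Module (A₀ ⧸ I) V := htV.module
  letI mW : Module (A₀ ⧸ I) W := htW.module
  obtain ⟨φ, hφ⟩ : ∃ φ : Module.Dual (A₀ ⧸ I) V, φ x ≠ 0 := by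
    by_contra hc
    push_neg at hc
    exact hx ((Module.forall_dual_apply_eq_zero_iff (A₀ ⧸ I) x).mp hc)
  refine ⟨{ toFun := fun v => φ v • w₀
            map_add' := fun v₁ v₂ => by
              show φ (v₁ + v₂) • w₀ = φ v₁ • w₀ + φ v₂ • w₀
              rw [map_add, add_smul]
            map_smul' := fun a v => by
              show φ (a • v) • w₀ = a • (φ v • w₀)
              rw [← htV.mk_smul a v, map_smul, smul_eq_mul, mul_smul, htW.mk_smul] }, ?_⟩
  intro h0
  simp only [LinearMap.coe_mk, AddHom.coe_mk] at h0
  apply hw₀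
  have : (φ x)⁻¹ • (φ x • w₀) = 0 := by rw [h0, smul_zero]
  rwa [smul_smul, inv_mul_cancel₀ hφ, one_smul] at this

variable {M : Type*} [AddCommGroup M] [Module A₀ M]

private theorem core_prelude (c₀ : A₀) {n : ℕ} (hn : 2 ≤ n) (hcn : c₀ ^ n = 0)
    (e : Module.End A₀ M) (hee : e * e = e)
    (hce : (c₀ • (1 : Module.End A₀ M)) * e = 0) :
    (∀ m, e (e m) = e m) ∧ (∀ m, c₀ • (e m) = 0) ∧
      (∀ m w, e m = c₀ • w → e m = 0) := by
  have hfix : ∀ m, e (e m) = e m := by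
    intro m
    conv_rhs => rw [← hee]
    rfl
  have hcN : ∀ m, c₀ • (e m) = 0 := by
    intro m
    have := congrArg (fun φ : Module.End A₀ M => φ m) hce
    simpa using this
  refine ⟨hfix, hcN, ?_⟩
  intro m w hw
  have : e (e m) = e (c₀ • w) := by rw [hw]
  rw [hfix, map_smul] at this
  rw [this, hcN]

/-- Core contradiction, left version: no nonzero idempotent `e` in `End_{A₀}(M)` with
`Λe` simple. -/
theorem core_left (c₀ : A₀) {n : ℕ} (hn : 2 ≤ n) (hcn : c₀ ^ n = 0)
    (hmax : (Ideal.span ({c₀} : Set A₀)).IsMaximal)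
    (hann : ∀ a : A₀, a * c₀ ^ (n - 1) = 0 → c₀ ∣ a)
    (g : M →ₗ[A₀] A₀) (m₀ : M) (hgm₀ : g m₀ = 1)
    (e : Module.End A₀ M) (hee : e * e = e) (hene : e ≠ 0)
    (hsimple : IsSimpleModule (Module.End A₀ M)
      (span (Module.End A₀ M) ({e} : Set (Module.End A₀ M)))) : False := by
  set c : Module.End A₀ M := c₀ • (1 : Module.End A₀ M) with hc
  have hc_apply : ∀ m : M, c m = c₀ • m := fun m => rfl
  have hc_central : ∀ γ : Module.End A₀ M, c * γ = γ * c := by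
    intro γ; ext m
    show c (γ m) = γ (c m)
    rw [hc_apply, hc_apply, map_smul]
  have hc_pow : ∀ j : ℕ, c ^ j = (c₀ ^ j) • (1 : Module.End A₀ M) := by
    intro j
    induction j with
    | zero => simp
    | succ j ih =>
      rw [pow_succ, ih, pow_succ]
      ext m
      show ((c₀ ^ j) • (1:Module.End A₀ M) * c) m = _
      show (c₀ ^ j) • (c m) = (c₀ ^ j * c₀) • m
      rw [hc_apply, mul_smul]
  have hcn' : c ^ n = 0 := by rw [hc_pow, hcn, zero_smul]
  -- c * e = 0 since the span of e is simple and c is central nilpotent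
  have hce : c * e = 0 := by
    have hmem : e ∈ span (Module.End A₀ M) ({e} : Set (Module.End A₀ M)) := mem_span_singleton_self e
    have := central_nilpotent_kills hsimple hc_central hcn'
      (⟨e, hmem⟩ : span (Module.End A₀ M) ({e} : Set (Module.End A₀ M)))
    have h2 : c • e = 0 := congrArg Subtype.val this
    rwa [smul_eq_mul] at h2
  obtain ⟨hfix, hcN, hNF⟩ := core_prelude c₀ hn hcn e hee hce
  -- there is m₁ with e m₁ not in c₀ • M
  obtain ⟨m₁, hm₁⟩ : ∃ m₁, ¬∃ w, e m₁ = c₀ • w := by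
    by_contra hcon
    push_neg at hcon
    apply hene
    ext m
    obtain ⟨w, hw⟩ := hcon m
    exact (hNF m w hw).trans rfl
  have hx₁ : e m₁ ≠ 0 := fun h0 => hm₁ ⟨0, by rw [h0, smul_zero]⟩
  -- basic consequence of hann : c₀ ^ (n-1) ≠ 0
  have hc1 : c₀ ^ (n - 1) ≠ 0 := by
    intro h0
    obtain ⟨b, hb⟩ := hann 1 (by rw [one_mul, h0])
    have : (1 : A₀) ∈ Ideal.span ({c₀} : Set A₀) := by
      rw [Ideal.mem_span_singleton]; exact ⟨b, hb⟩
    exact hmax.ne_top (Ideal.eq_top_iff_one _ |>.mpr this)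
  -- the quotient V = M / c₀ M
  set Fsub : Submodule A₀ M := LinearMap.range (c : M →ₗ[A₀] M) with hF
  set π : M →ₗ[A₀] M ⧸ Fsub := Fsub.mkQ with hπ
  have hVtor : ∀ v : M ⧸ Fsub, c₀ • v = 0 := by
    intro v
    obtain ⟨m, rfl⟩ := Fsub.mkQ_surjective v
    rw [← map_smul]
    rw [Submodule.mkQ_apply, Submodule.Quotient.mk_eq_zero]
    exact ⟨m, rfl⟩
  have hxne : π (e m₁) ≠ 0 := by
    rw [hπ, Submodule.mkQ_apply, Ne, Submodule.Quotient.mk_eq_zero]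
    rintro ⟨y, hy⟩
    exact hm₁ ⟨y, hy.symm⟩
  -- K = A₀ / (c₀)
  set I : Ideal A₀ := Ideal.span ({c₀} : Set A₀) with hI
  haveI : I.IsMaximal := hmax
  have hKtor : ∀ q : A₀ ⧸ I, c₀ • q = 0 := by
    intro q
    obtain ⟨a, rfl⟩ := Ideal.Quotient.mk_surjective q
    have : c₀ • (Ideal.Quotient.mk I a) = Ideal.Quotient.mk I (c₀ * a) := rfl
    rw [this, Ideal.Quotient.eq_zero_iff_mem]
    exact Ideal.mul_mem_right a _ (Ideal.subset_span rfl)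
  haveI : Nontrivial (A₀ ⧸ I) := Ideal.Quotient.nontrivial_iff.mpr hmax.ne_top
  obtain ⟨h, hh⟩ := exists_torsion_hom c₀ hmax hVtor hKtor (π (e m₁)) hxne 1 one_ne_zero
  -- the map w : K → M
  set z₀ : M := c₀ ^ (n - 1) • m₀ with hz₀
  set τ : A₀ →ₗ[A₀] M := LinearMap.toSpanSingleton A₀ M z₀ with hτ
  have hker : I ≤ LinearMap.ker τ := by
    rw [hI, Ideal.span_le]
    intro a ha
    have ha' : a = c₀ := ha
    simp only [SetLike.mem_coe, LinearMap.mem_ker, ha']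
    show c₀ • z₀ = 0
    rw [hz₀, smul_smul, ← pow_succ']
    have hsucc : n - 1 + 1 = n := by omega
    rw [hsucc, hcn, zero_smul]
  set w : (A₀ ⧸ I) →ₗ[A₀] M := Submodule.liftQ I τ hker with hw
  have hw_apply : ∀ a : A₀, w (Ideal.Quotient.mk I a) = (a * c₀ ^ (n - 1)) • m₀ := by
    intro a
    show τ a = _
    rw [hτ]
    show a • z₀ = _
    rw [hz₀, smul_smul]
  have hwinj : ∀ q : A₀ ⧸ I, w q = 0 → q = 0 := by
    intro q h0
    obtain ⟨a, rfl⟩ := Ideal.Quotient.mk_surjective q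
    rw [hw_apply] at h0
    have : g ((a * c₀ ^ (n - 1)) • m₀) = 0 := by rw [h0, map_zero]
    rw [map_smul, hgm₀, smul_eq_mul, mul_one] at this
    obtain ⟨b, hb⟩ := hann a this
    rw [Ideal.Quotient.eq_zero_iff_mem, Ideal.mem_span_singleton]
    exact ⟨b, hb⟩
  set ψ  : Module.End A₀ M := w ∘ₗ (h ∘ₗ π) with hψ
  have hψx : ψ (e m₁) ≠ 0 := by
    intro h0
    have : h (π (e m₁)) = 0 := hwinj _ h0
    exact hh this
  -- Y : endomorphisms with range in c₀ • M
  set Y : Submodule (Module.End A₀ M) (Module.End A₀ M) :=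
    { carrier := {γ : Module.End A₀ M | ∀ m, ∃ u, γ m = c₀ • u}
      add_mem' := by
        rintro γ₁ γ₂ h₁ h₂
        intro m
        obtain ⟨u₁, hu₁⟩ := h₁ m
        obtain ⟨u₂, hu₂⟩ := h₂ m
        exact ⟨u₁ + u₂, by rw [LinearMap.add_apply, hu₁, hu₂, smul_add]⟩
      zero_mem' := fun m => ⟨0, by rw [LinearMap.zero_apply, smul_zero]⟩
      smul_mem' := by
        intro γ δ hδ m
        obtain ⟨u, hu⟩ := hδ m
        refine ⟨γ u, ?_⟩
        rw [smul_eq_mul]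
        show γ (δ m) = c₀ • γ u
        rw [hu, map_smul] } with hY
  have heY : e ∉ Y := by
    intro hmemY
    obtain ⟨u, hu⟩ := hmemY m₁
    exact hm₁ ⟨u, hu⟩
  set μ  : Module.End A₀ M := ψ * e with hμ
  have hμspan : μ ∈ span (Module.End A₀ M) ({e} : Set (Module.End A₀ M)) := by
    rw [mem_span_singleton]
    exact ⟨ψ, rfl⟩
  have hμY : μ ∈ Y := by
    intro m
    have : μ m = w (h (π (e m))) := rfl
    obtain ⟨a, ha⟩ := Ideal.Quotient.mk_surjective (h (π (e m)))
    rw [this, ← ha, hw_apply]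
    have hsucc : n - 2 + 1 = n - 1 := by omega
    refine ⟨(a * c₀ ^ (n - 2)) • m₀, ?_⟩
    rw [smul_smul, ← mul_assoc, mul_comm c₀ a, mul_assoc, ← pow_succ', hsucc]
  have hμne : μ ≠ 0 := by
    intro h0
    apply hψx
    have : μ m₁ = 0 := by rw [h0]; rfl
    rwa [show μ m₁ = ψ (e m₁) from rfl] at this
  -- contradiction with simplicity
  set X' : Submodule (Module.End A₀ M) (span (Module.End A₀ M) ({e} : Set (Module.End A₀ M))) :=
    Submodule.comap (span (Module.End A₀ M) ({e} : Set (Module.End A₀ M))).subtype Y with hX'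
  rcases hsimple.1.2 X' with hbot | htop
  · have : (⟨μ, hμspan⟩ : span (Module.End A₀ M) ({e} : Set (Module.End A₀ M))) ∈ X' := hμY
    rw [hbot] at this
    have : μ = 0 := congrArg Subtype.val (Submodule.mem_bot (Module.End A₀ M) |>.mp this)
    exact hμne this
  · have : (⟨e, mem_span_singleton_self e⟩ : span (Module.End A₀ M) ({e} : Set (Module.End A₀ M))) ∈ X' := by
      rw [htop]; trivial
    exact heY this

end Core

section CoreRight
variable {A₀ : Type*} [CommRing A₀] {M : Type*} [AddCommGroup M] [Module A₀ M]

/-- Core contradiction, right version: no nonzero idempotent `e` in `End_{A₀}(M)` with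
`eΛ` simple as a right module (i.e. `Λᵐᵒᵖ (op e)` simple). -/
theorem core_right (c₀ : A₀) {n : ℕ} (hn : 2 ≤ n) (hcn : c₀ ^ n = 0)
    (hmax : (Ideal.span ({c₀} : Set A₀)).IsMaximal)
    (hann : ∀ a : A₀, a * c₀ ^ (n - 1) = 0 → c₀ ∣ a)
    (g : M →ₗ[A₀] A₀) (m₀ : M) (hgm₀ : g m₀ = 1)
    (e : Module.End A₀ M) (hee : e * e = e) (hene : e ≠ 0)
    (hsimple : IsSimpleModule (Module.End A₀ M)ᵐᵒᵖ
      (span (Module.End A₀ M)ᵐᵒᵖ ({op e} : Set (Module.End A₀ M)ᵐᵒᵖ))) : False := by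
  set c : Module.End A₀ M := c₀ • (1 : Module.End A₀ M) with hc
  have hc_apply : ∀ m : M, c m = c₀ • m := fun m => rfl
  have hc_central : ∀ γ : Module.End A₀ M, c * γ = γ * c := by
    intro γ; ext m
    show c (γ m) = γ (c m)
    rw [hc_apply, hc_apply, map_smul]
  have hoc_central : ∀ ζ : (Module.End A₀ M)ᵐᵒᵖ, (op c) * ζ = ζ * (op c) := by
    intro ζ
    rw [← op_unop ζ, ← op_mul, ← op_mul, hc_central]
  have hc_pow : ∀ j : ℕ, c ^ j = (c₀ ^ j) • (1 : Module.End A₀ M) := by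
    intro j
    induction j with
    | zero => simp
    | succ j ih =>
      rw [pow_succ, ih, pow_succ]
      ext m
      show ((c₀ ^ j) • (1 : Module.End A₀ M) * c) m = _
      show (c₀ ^ j) • (c m) = (c₀ ^ j * c₀) • m
      rw [hc_apply, mul_smul]
  have hocn' : (op c) ^ n = 0 := by
    rw [← op_pow, hc_pow, hcn, zero_smul, op_zero]
  -- e * c = 0 (hence c * e = 0)
  have hece : e * c = 0 := by
    have hmem : op e ∈ span (Module.End A₀ M)ᵐᵒᵖ ({op e} : Set (Module.End A₀ M)ᵐᵒᵖ) :=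
      mem_span_singleton_self (op e)
    have := central_nilpotent_kills hsimple hoc_central hocn'
      (⟨op e, hmem⟩ : span (Module.End A₀ M)ᵐᵒᵖ ({op e} : Set (Module.End A₀ M)ᵐᵒᵖ))
    have h2 : (op c) • (op e) = 0 := congrArg Subtype.val this
    rw [smul_eq_mul, ← op_mul] at h2
    have h3 : e * c = unop 0 := congrArg unop h2
    rwa [unop_zero] at h3
  have hce : c * e = 0 := by rw [hc_central e] at *; exact hece
  obtain ⟨hfix, hcN, hNF⟩ := core_prelude c₀ hn hcn e hee hce
  -- m₁ with e m₁ ∉ c₀ • M ; in particular e m₁ ≠ 0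
  obtain ⟨m₁, hm₁⟩ : ∃ m₁, ¬∃ w, e m₁ = c₀ • w := by
    by_contra hcon
    push_neg at hcon
    apply hene
    ext m
    obtain ⟨w, hw⟩ := hcon m
    exact (hNF m w hw).trans rfl
  have hx₁ : e m₁ ≠ 0 := fun h0 => hm₁ ⟨0, by rw [h0, smul_zero]⟩
  have hc1 : c₀ ^ (n - 1) ≠ 0 := by
    intro h0
    obtain ⟨b, hb⟩ := hann 1 (by rw [one_mul, h0])
    have : (1 : A₀) ∈ Ideal.span ({c₀} : Set A₀) := by
      rw [Ideal.mem_span_singleton]; exact ⟨b, hb⟩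
    exact hmax.ne_top (Ideal.eq_top_iff_one _ |>.mpr this)
  -- socF = soc + c₀ M as a submodule
  set socF : Submodule A₀ M :=
    { carrier := {m : M | ∃ u w, c₀ • u = 0 ∧ m = u + c₀ • w}
      add_mem' := by
        rintro m m' ⟨u, w, hu, rfl⟩ ⟨u', w', hu', rfl⟩
        exact ⟨u + u', w + w', by rw [smul_add, hu, hu', add_zero],
          by rw [smul_add]; abel⟩
      zero_mem' := ⟨0, 0, by rw [smul_zero], by rw [smul_zero, add_zero]⟩
      smul_mem' := by
        rintro a m ⟨u, w, hu, rfl⟩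
        exact ⟨a • u, a • w, by rw [smul_comm, hu, smul_zero],
          by rw [smul_add, smul_comm a c₀ w]⟩ } with hsocF
  have hm₀notin : m₀ ∉ socF := by
    rintro ⟨u, w, hu, hum⟩
    have h1 : c₀ ^ (n - 1) • m₀ = 0 := by
      rw [hum, smul_add]
      have hn2 : n - 1 = (n - 2) + 1 := by omega
      have hu1 : c₀ ^ (n - 1) • u = 0 := by
        rw [hn2, pow_succ, mul_smul, hu, smul_zero]
      have hw1 : c₀ ^ (n - 1) • (c₀ • w) = 0 := by
        rw [smul_smul, ← pow_succ]
        have : n - 1 + 1 = n := by omega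
        rw [this, hcn, zero_smul]
      rw [hu1, hw1, add_zero]
    have h2 : g (c₀ ^ (n - 1) • m₀) = c₀ ^ (n - 1) := by
      rw [map_smul, hgm₀, smul_eq_mul, mul_one]
    rw [h1, map_zero] at h2
    exact hc1 h2.symm
  set π : M →ₗ[A₀] M ⧸ socF := socF.mkQ with hπ
  have hVtor : ∀ v : M ⧸ socF, c₀ • v = 0 := by
    intro v
    obtain ⟨m, rfl⟩ := socF.mkQ_surjective v
    rw [← map_smul, Submodule.mkQ_apply, Submodule.Quotient.mk_eq_zero]
    exact ⟨0, m, by rw [smul_zero], by rw [zero_add]⟩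
  have hx' : π m₀ ≠ 0 := by
    rw [hπ, Submodule.mkQ_apply, Ne, Submodule.Quotient.mk_eq_zero]
    exact hm₀notin
  -- target N = range e
  set N : Submodule A₀ M := LinearMap.range (e : M →ₗ[A₀] M) with hN
  have hNtor : ∀ y : N, c₀ • y = 0 := by
    rintro ⟨y, m, rfl⟩
    apply Subtype.ext
    show c₀ • (e m) = 0
    exact hcN m
  have hw₀ : (⟨e m₁, ⟨m₁, rfl⟩⟩ : N) ≠ 0 := by
    intro h0
    exact hx₁ (congrArg Subtype.val h0)
  obtain ⟨h', hh'⟩ := exists_torsion_hom c₀ hmax hVtor hNtor (π m₀) hx'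
    (⟨e m₁, ⟨m₁, rfl⟩⟩ : N) hw₀
  set lam : Module.End A₀ M := N.subtype ∘ₗ (h' ∘ₗ π) with hlam
  have hlam_apply : ∀ m, lam m = ((h' (π m) : N) : M) := fun m => rfl
  have hlam_mem : ∀ m, lam m ∈ N := fun m => ((h' (π m)) : N).2
  have hefix : ∀ y ∈ N, e y = y := by
    rintro y ⟨m, rfl⟩
    exact hfix m
  have helam : e * lam = lam := by
    ext m
    show e (lam m) = lam m
    exact hefix _ (hlam_mem m)
  have hlamm₀ : lam m₀ ≠ 0 := by
    rw [hlam_apply]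
    intro h0
    apply hh'
    exact Subtype.ext h0
  -- Y' : right ideal of maps vanishing on the socle
  set Y' : Submodule (Module.End A₀ M)ᵐᵒᵖ (Module.End A₀ M)ᵐᵒᵖ :=
    { carrier := {ζ | ∀ m : M, c₀ • m = 0 → (unop ζ) m = 0}
      add_mem' := by
        intro ζ₁ ζ₂ h₁ h₂ m hm
        rw [unop_add, LinearMap.add_apply, h₁ m hm, h₂ m hm, add_zero]
      zero_mem' := fun m _ => rfl
      smul_mem' := by
        intro γ ζ hζ m hm
        rw [smul_eq_mul, unop_mul, Module.End.mul_apply]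
        apply hζ
        show c₀ • ((unop γ) m) = 0
        rw [← map_smul, hm, map_zero] } with hY'
  have hopeY' : op e ∉ Y' := by
    intro hmem
    have := hmem (e m₁) (hcN m₁)
    rw [unop_op] at this
    rw [hefix _ ⟨m₁, rfl⟩] at this
    exact hx₁ this
  set μ' : (Module.End A₀ M)ᵐᵒᵖ := op lam with hμ'
  have hμ'span : μ' ∈ span (Module.End A₀ M)ᵐᵒᵖ ({op e} : Set (Module.End A₀ M)ᵐᵒᵖ) := by
    rw [mem_span_singleton]
    refine ⟨op lam, ?_⟩
    rw [smul_eq_mul, ← op_mul, helam]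
  have hμ'Y' : μ' ∈ Y' := by
    intro m hm
    rw [hμ', unop_op, hlam_apply]
    have : π m = 0 := by
      rw [hπ, Submodule.mkQ_apply, Submodule.Quotient.mk_eq_zero]
      exact ⟨m, 0, hm, by rw [smul_zero, add_zero]⟩
    rw [this, map_zero]
    rfl
  have hμ'ne : μ' ≠ 0 := by
    intro h0
    apply hlamm₀
    have : lam = 0 := by
      have := congrArg unop h0
      rwa [hμ', unop_op, unop_zero] at this
    rw [this]; rfl
  set X' : Submodule (Module.End A₀ M)ᵐᵒᵖ
      (span (Module.End A₀ M)ᵐᵒᵖ ({op e} : Set (Module.End A₀ M)ᵐᵒᵖ)) :=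
    Submodule.comap (span (Module.End A₀ M)ᵐᵒᵖ ({op e} : Set (Module.End A₀ M)ᵐᵒᵖ)).subtype Y'
    with hX'
  rcases hsimple.1.2 X' with hbot | htop
  · have : (⟨μ', hμ'span⟩ : span (Module.End A₀ M)ᵐᵒᵖ
        ({op e} : Set (Module.End A₀ M)ᵐᵒᵖ)) ∈ X' := hμ'Y'
    rw [hbot] at this
    exact hμ'ne (congrArg Subtype.val (Submodule.mem_bot _ |>.mp this))
  · have : (⟨op e, mem_span_singleton_self (op e)⟩ : span (Module.End A₀ M)ᵐᵒᵖ
        ({op e} : Set (Module.End A₀ M)ᵐᵒᵖ)) ∈ X' := by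
      rw [htop]; trivial
    exact hopeY' this

end CoreRight

section Afacts
variable {R : Type*} [Field R] (f : Polynomial R) (n : ℕ)

local notation "A" => Polynomial R ⧸ Ideal.span ({f ^ n} : Set (Polynomial R))
local notation "II" => Ideal.span ({f ^ n} : Set (Polynomial R))

theorem quotA_pow_eq_zero : (Ideal.Quotient.mk II f) ^ n = 0 := by
  rw [← map_pow, Ideal.Quotient.eq_zero_iff_mem]
  exact Ideal.subset_span rfl

theorem quotA_nontrivial (hf : Irreducible f) (hn : 2 ≤ n) : Nontrivial A := by
  refine Ideal.Quotient.nontrivial_iff.mpr ?_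
  rw [Ne, Ideal.span_singleton_eq_top]
  intro hu
  exact hf.not_isUnit (isUnit_of_dvd_unit (dvd_pow_self f (by omega : n ≠ 0)) hu)

theorem quotA_max (hf : Irreducible f) (hn : 2 ≤ n) :
    (Ideal.span ({Ideal.Quotient.mk II f} : Set A)).IsMaximal := by
  have hmap : Ideal.span ({Ideal.Quotient.mk II f} : Set A)
      = Ideal.map (Ideal.Quotient.mk II) (Ideal.span ({f} : Set (Polynomial R))) := by
    rw [Ideal.map_span, Set.image_singleton]
  have hmaxf : (Ideal.span ({f} : Set (Polynomial R))).IsMaximal :=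
    PrincipalIdealRing.isMaximal_of_irreducible hf
  have hsurj : Function.Surjective (Ideal.Quotient.mk II) := Ideal.Quotient.mk_surjective
  rcases Ideal.map_eq_top_or_isMaximal_of_surjective _ hsurj hmaxf with htop | hmax
  · exfalso
    rw [← hmap, Ideal.span_singleton_eq_top] at htop
    haveI := quotA_nontrivial f n hf hn
    have : IsUnit ((Ideal.Quotient.mk II f) ^ n) := htop.pow n
    rw [quotA_pow_eq_zero] at this
    exact zero_ne_one (isUnit_zero_iff.mp this)
  · rwa [hmap]

theorem quotA_ann (hf : Irreducible f) (hn : 2 ≤ n) : ∀ a : A, a * (Ideal.Quotient.mk II f) ^ (n - 1) = 0 →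
    (Ideal.Quotient.mk II f) ∣ a := by
  intro a ha
  obtain ⟨p, rfl⟩ := Ideal.Quotient.mk_surjective a
  rw [← map_pow, ← map_mul, Ideal.Quotient.eq_zero_iff_mem, Ideal.mem_span_singleton] at ha
  have hfn : f ^ n = f ^ (n - 1) * f := by
    rw [← pow_succ]
    congr 1
    omega
  rw [hfn, mul_comm p] at ha
  have hfp : f ∣ p :=
    (mul_dvd_mul_iff_left (pow_ne_zero (n - 1) hf.ne_zero)).mp ha
  obtain ⟨q, rfl⟩ := hfp
  exact ⟨Ideal.Quotient.mk II q, by rw [map_mul]⟩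

theorem quotA_unit (hf : Irreducible f) (hn : 2 ≤ n) : ∀ a : A, a ∉ Ideal.span ({Ideal.Quotient.mk II f} : Set A) →
    IsUnit a := by
  intro a hanot
  set c₀ : A := Ideal.Quotient.mk II f with hc₀
  set J : Ideal A := Ideal.span ({c₀} : Set A) ⊔ Ideal.span ({a} : Set A) with hJ
  have hmax := quotA_max f n hf hn
  have hlt : Ideal.span ({c₀} : Set A) < J := by
    rw [hJ]
    refine lt_of_le_of_ne le_sup_left ?_
    intro heq
    apply hanot
    rw [heq]
    exact Ideal.mem_sup_right (Ideal.subset_span rfl)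
  have hJtop : J = ⊤ := hmax.1.2 J hlt
  have h1 : (1 : A) ∈ J := by rw [hJtop]; trivial
  rw [hJ] at h1
  obtain ⟨x, hx, y, hy, hxy⟩ := Submodule.mem_sup.mp h1
  rw [Ideal.mem_span_singleton] at hx hy
  obtain ⟨b, rfl⟩ := hx
  obtain ⟨d, rfl⟩ := hy
  have hynil : IsNilpotent (c₀ * b) := by
    refine ⟨n, ?_⟩
    rw [mul_pow, quotA_pow_eq_zero, zero_mul]
  have hyunit : IsUnit (a * d) := by
    have : a * d = 1 - c₀ * b := by rw [← hxy]; ring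
    rw [this]
    exact IsNilpotent.isUnit_one_sub hynil
  exact isUnit_of_mul_isUnit_left hyunit

/-- From the generator hypothesis, a split surjection `M → A`. -/
theorem quotA_gen (hf : Irreducible f) (hn : 2 ≤ n) {M : Type*} [AddCommGroup M] [Module A M]
    (hgen : ∃ (k : ℕ) (g : (Fin k → M) →ₗ[A] A), Function.Surjective g) :
    ∃ (g : M →ₗ[A] A) (m₀ : M), g m₀ = 1 := by
  obtain ⟨k, G, hG⟩ := hgen
  obtain ⟨v, hv⟩ := hG 1
  have hv1 : ∑ j : Fin k, G (Pi.single j (v j)) = 1 := by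
    rw [← map_sum]
    rw [Finset.univ_sum_single v]
    exact hv
  have hex : ∃ j : Fin k, G (Pi.single j (v j)) ∉
      Ideal.span ({Ideal.Quotient.mk II f} : Set A) := by
    by_contra hall
    push_neg at hall
    have : (1 : A) ∈ Ideal.span ({Ideal.Quotient.mk II f} : Set A) := by
      rw [← hv1]
      exact Submodule.sum_mem _ (fun j _ => hall j)
    exact (quotA_max f n hf hn).ne_top ((Ideal.eq_top_iff_one _).mpr this)
  obtain ⟨j, hj⟩ := hex
  have hu : IsUnit (G (Pi.single j (v j))) := quotA_unit f n hf hn _ hj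
  refine ⟨(↑hu.unit⁻¹ : A) • (G ∘ₗ LinearMap.single A (fun _ : Fin k => M) j), v j, ?_⟩
  rw [LinearMap.smul_apply, LinearMap.comp_apply]
  show (↑hu.unit⁻¹ : A) • G (Pi.single j (v j)) = 1
  rw [smul_eq_mul]
  exact hu.val_inv_mul

end Afacts

noncomputable section DualTheory
variable (R : Type*) [CommRing R] {Γ : Type*} [Ring Γ] [Algebra R Γ]

/-- The action of `γ : Γ` on a left module, as an `R`-linear map. -/
def actL (T : Type*) [AddCommGroup T] [Module R T] [Module Γ T] [IsScalarTower R Γ T]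
    (γ : Γ) : T →ₗ[R] T where
  toFun t := γ • t
  map_add' x y := smul_add γ x y
  map_smul' r t := by
    simp only [RingHom.id_apply]
    rw [← algebraMap_smul Γ r t, ← mul_smul, ← Algebra.commutes r γ, mul_smul,
      algebraMap_smul]

@[simp] theorem actL_apply (T : Type*) [AddCommGroup T] [Module R T] [Module Γ T]
    [IsScalarTower R Γ T] (γ : Γ) (t : T) : actL R T γ t = γ • t := rfl

variable (T : Type*) [AddCommGroup T] [Module R T] [Module Γ T] [IsScalarTower R Γ T]

/-- Right (= `Γᵐᵒᵖ`) module structure on the `R`-dual of a left `Γ`-module. -/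
instance dualLSMul : SMul Γᵐᵒᵖ (T →ₗ[R] R) :=
  ⟨fun ζ φ => φ ∘ₗ actL R T (unop ζ)⟩

@[simp] theorem dualL_smul_apply (ζ : Γᵐᵒᵖ) (φ : T →ₗ[R] R) (t : T) :
    (ζ • φ) t = φ (unop ζ • t) := rfl

instance dualLModule : Module Γᵐᵒᵖ (T →ₗ[R] R) where
  smul := (· • ·)
  one_smul φ := by ext t; rw [dualL_smul_apply, unop_one, one_smul]
  mul_smul ζ₁ ζ₂ φ := by
    ext t
    rw [dualL_smul_apply, unop_mul, mul_smul, dualL_smul_apply, dualL_smul_apply]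
  smul_zero ζ := by ext t; rfl
  smul_add ζ φ₁ φ₂ := by ext t; rfl
  add_smul ζ₁ ζ₂ φ := by
    ext t
    rw [dualL_smul_apply, unop_add, add_smul, map_add, LinearMap.add_apply,
      dualL_smul_apply, dualL_smul_apply]
  zero_smul φ := by
    ext t
    rw [dualL_smul_apply, unop_zero, zero_smul, map_zero, LinearMap.zero_apply]

instance dualLTower : IsScalarTower R Γᵐᵒᵖ (T →ₗ[R] R) := by
  constructor
  intro r ζ φ
  ext t
  rw [dualL_smul_apply, LinearMap.smul_apply, dualL_smul_apply, unop_smul,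
    smul_assoc, map_smul]

/-- Left module structure on the `R`-dual of a right (= `Γᵐᵒᵖ`) module. -/
instance dualRSMul (U : Type*) [AddCommGroup U] [Module R U] [Module Γᵐᵒᵖ U]
    [IsScalarTower R Γᵐᵒᵖ U] : SMul Γ (U →ₗ[R] R) :=
  ⟨fun γ ψ => ψ ∘ₗ actL R U (op γ)⟩

@[simp] theorem dualR_smul_apply (U : Type*) [AddCommGroup U] [Module R U] [Module Γᵐᵒᵖ U]
    [IsScalarTower R Γᵐᵒᵖ U] (γ : Γ) (ψ : U →ₗ[R] R) (u : U) :
    (γ • ψ) u = ψ (op γ • u) := rfl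

instance dualRModule (U : Type*) [AddCommGroup U] [Module R U] [Module Γᵐᵒᵖ U]
    [IsScalarTower R Γᵐᵒᵖ U] : Module Γ (U →ₗ[R] R) where
  smul := (· • ·)
  one_smul ψ := by ext u; rw [dualR_smul_apply, op_one, one_smul]
  mul_smul γ₁ γ₂ ψ := by
    ext u
    rw [dualR_smul_apply, dualR_smul_apply, dualR_smul_apply, op_mul, mul_smul]
  smul_zero γ := by ext u; rfl
  smul_add γ ψ₁ ψ₂ := by ext u; rfl
  add_smul γ₁ γ₂ ψ := by
    ext u
    rw [dualR_smul_apply, op_add, add_smul, map_add, LinearMap.add_apply,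
      dualR_smul_apply, dualR_smul_apply]
  zero_smul ψ := by
    ext u
    rw [dualR_smul_apply, op_zero, zero_smul, map_zero, LinearMap.zero_apply]

instance dualRTower (U : Type*) [AddCommGroup U] [Module R U] [Module Γᵐᵒᵖ U]
    [IsScalarTower R Γᵐᵒᵖ U] : IsScalarTower R Γ (U →ₗ[R] R) := by
  constructor
  intro r γ ψ
  ext u
  rw [dualR_smul_apply, LinearMap.smul_apply, dualR_smul_apply]
  have : op (r • γ) = r • op γ := rfl
  rw [this, smul_assoc, map_smul]

/-- Evaluation into the double dual, for a left module; it is `Γ`-linear. -/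
def evL : T →ₗ[Γ] ((T →ₗ[R] R) →ₗ[R] R) where
  toFun t := Module.Dual.eval R T t
  map_add' x y := map_add _ x y
  map_smul' γ t := by
    ext φ
    rfl

@[simp] theorem evL_apply (t : T) (φ : T →ₗ[R] R) : evL (Γ := Γ) R T t φ = φ t := rfl

/-- Evaluation into the double dual, for a right module; it is `Γᵐᵒᵖ`-linear. -/
def evR (U : Type*) [AddCommGroup U] [Module R U] [Module Γᵐᵒᵖ U]
    [IsScalarTower R Γᵐᵒᵖ U] : U →ₗ[Γᵐᵒᵖ] ((U →ₗ[R] R) →ₗ[R] R) where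
  toFun u := Module.Dual.eval R U u
  map_add' x y := map_add _ x y
  map_smul' ζ u := by
    ext ψ
    rfl

@[simp] theorem evR_apply (U : Type*) [AddCommGroup U] [Module R U] [Module Γᵐᵒᵖ U]
    [IsScalarTower R Γᵐᵒᵖ U] (u : U) (ψ : U →ₗ[R] R) : evR (Γ := Γ) R U u ψ = ψ u := rfl

/-- A `Γ`-linear map, viewed as `R`-linear. -/
def restrictRL {T' : Type*} [AddCommGroup T'] [Module R T'] [Module Γ T']
    [IsScalarTower R Γ T'] (φmap : T →ₗ[Γ] T') : T →ₗ[R] T' where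
  toFun := φmap
  map_add' := φmap.map_add
  map_smul' r t := by
    simp only [RingHom.id_apply]
    rw [← algebraMap_smul Γ r t, map_smul, algebraMap_smul]

@[simp] theorem restrictRL_apply {T' : Type*} [AddCommGroup T'] [Module R T'] [Module Γ T']
    [IsScalarTower R Γ T'] (φmap : T →ₗ[Γ] T') (t : T) : restrictRL R T φmap t = φmap t := rfl

/-- A `Γᵐᵒᵖ`-linear map, viewed as `R`-linear. -/
def restrictRR {U U' : Type*} [AddCommGroup U] [Module R U] [Module Γᵐᵒᵖ U]
    [IsScalarTower R Γᵐᵒᵖ U] [AddCommGroup U'] [Module R U'] [Module Γᵐᵒᵖ U']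
    [IsScalarTower R Γᵐᵒᵖ U'] (ψmap : U →ₗ[Γᵐᵒᵖ] U') : U →ₗ[R] U' where
  toFun := ψmap
  map_add' := ψmap.map_add
  map_smul' r u := by
    simp only [RingHom.id_apply]
    rw [← algebraMap_smul Γᵐᵒᵖ r u, map_smul, algebraMap_smul]

@[simp] theorem restrictRR_apply {U U' : Type*} [AddCommGroup U] [Module R U] [Module Γᵐᵒᵖ U]
    [IsScalarTower R Γᵐᵒᵖ U] [AddCommGroup U'] [Module R U'] [Module Γᵐᵒᵖ U']
    [IsScalarTower R Γᵐᵒᵖ U'] (ψmap : U →ₗ[Γᵐᵒᵖ] U') (u : U) : restrictRR R ψmap u = ψmap u := rfl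

/-- Dual of a `Γ`-linear map between left modules: a `Γᵐᵒᵖ`-linear map between the duals. -/
def homDualL {T' : Type*} [AddCommGroup T'] [Module R T'] [Module Γ T']
    [IsScalarTower R Γ T'] (φmap : T →ₗ[Γ] T') : (T' →ₗ[R] R) →ₗ[Γᵐᵒᵖ] (T →ₗ[R] R) where
  toFun d := d ∘ₗ restrictRL R T φmap
  map_add' d₁ d₂ := by ext t; rfl
  map_smul' ζ d := by
    ext t
    show (ζ • d) (φmap t) = d (φmap (unop ζ • t))
    rw [dualL_smul_apply, map_smul φmap]

@[simp] theorem homDualL_apply {T' : Type*} [AddCommGroup T'] [Module R T'] [Module Γ T']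
    [IsScalarTower R Γ T'] (φmap : T →ₗ[Γ] T') (d : T' →ₗ[R] R) (t : T) :
    homDualL R T φmap d t = d (φmap t) := rfl

/-- Dual of a `Γᵐᵒᵖ`-linear map between right modules: a `Γ`-linear map between the duals. -/
def homDualR {U U' : Type*} [AddCommGroup U] [Module R U] [Module Γᵐᵒᵖ U]
    [IsScalarTower R Γᵐᵒᵖ U] [AddCommGroup U'] [Module R U'] [Module Γᵐᵒᵖ U']
    [IsScalarTower R Γᵐᵒᵖ U'] (ψmap : U →ₗ[Γᵐᵒᵖ] U') :
    (U' →ₗ[R] R) →ₗ[Γ] (U →ₗ[R] R) where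
  toFun d := d ∘ₗ restrictRR R ψmap
  map_add' d₁ d₂ := by ext u; rfl
  map_smul' γ d := by
    ext u
    show (γ • d) (ψmap u) = d (ψmap (op γ • u))
    rw [dualR_smul_apply, map_smul ψmap]

@[simp] theorem homDualR_apply {U U' : Type*} [AddCommGroup U] [Module R U] [Module Γᵐᵒᵖ U]
    [IsScalarTower R Γᵐᵒᵖ U] [AddCommGroup U'] [Module R U'] [Module Γᵐᵒᵖ U']
    [IsScalarTower R Γᵐᵒᵖ U'] (ψmap : U →ₗ[Γᵐᵒᵖ] U') (d : U' →ₗ[R] R) (u : U) :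
    homDualR R ψmap d u = d (ψmap u) := rfl

end DualTheory

/-- Extension property of an injective module (in `Type 0`) against small modules in
arbitrary universes. -/
theorem Module.Injective.extends_of_small {Γ : Type*} [Ring Γ] {Q : Type}
    [AddCommGroup Q] [Module Γ Q] (hI : Module.Injective Γ Q) {X Y : Type*}
    [AddCommGroup X] [Module Γ X] [AddCommGroup Y] [Module Γ Y]
    [Small.{0} X] [Small.{0} Y] (i : X →ₗ[Γ] Y) (hi : Function.Injective i)
    (g : X →ₗ[Γ] Q) : ∃ h : Y →ₗ[Γ] Q, ∀ x, h (i x) = g x := by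
  set eX : Shrink.{0} X ≃ₗ[Γ] X := Shrink.linearEquiv Γ X with heX
  set eY : Shrink.{0} Y ≃ₗ[Γ] Y := Shrink.linearEquiv Γ Y with heY
  set i₀ : Shrink.{0} X →ₗ[Γ] Shrink.{0} Y :=
    eY.symm.toLinearMap ∘ₗ (i ∘ₗ eX.toLinearMap) with hi₀def
  have hi₀ : Function.Injective i₀ := by
    intro a b hab
    apply eX.toEquiv.injective
    apply hi
    apply eY.symm.toEquiv.injective
    exact hab
  obtain ⟨h₀, hh₀⟩ := hI.out i₀ hi₀ (g ∘ₗ eX.toLinearMap)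
  refine ⟨h₀ ∘ₗ eY.symm.toLinearMap, fun x => ?_⟩
  have h1 : eY.symm (i x) = i₀ (eX.symm x) := by
    rw [hi₀def]
    simp only [LinearMap.comp_apply, LinearEquiv.coe_coe]
    rw [eX.apply_symm_apply]
  show h₀ (eY.symm (i x)) = g x
  rw [h1, hh₀]
  show g (eX (eX.symm x)) = g x
  rw [eX.apply_symm_apply]

noncomputable section DualTransfer
variable {R : Type*} [Field R] {Γ : Type*} [Ring Γ] [Algebra R Γ]

/-- The `R`-dual of a finite-dimensional simple left `Γ`-module is a simple right
(`Γᵐᵒᵖ`-) module. -/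
theorem dualL_simple (T : Type*) [AddCommGroup T] [Module R T] [Module Γ T]
    [IsScalarTower R Γ T] [Module.Finite R T] (hT : IsSimpleModule Γ T) :
    IsSimpleModule Γᵐᵒᵖ (T →ₗ[R] R) := by
  haveI : Nontrivial T := IsSimpleModule.nontrivial Γ T
  obtain ⟨t₀, ht₀⟩ := exists_ne (0 : T)
  obtain ⟨φ₀', hφ₀'⟩ : ∃ φ : Module.Dual R T, φ t₀ ≠ 0 := by
    by_contra hc
    push_neg at hc
    exact ht₀ ((Module.forall_dual_apply_eq_zero_iff R t₀).mp hc)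
  have hbotne : (⊥ : Submodule Γᵐᵒᵖ (T →ₗ[R] R)) ≠ ⊤ := by
    intro h
    have : (φ₀' : T →ₗ[R] R) ∈ (⊤ : Submodule Γᵐᵒᵖ (T →ₗ[R] R)) := trivial
    rw [← h, Submodule.mem_bot] at this
    rw [this] at hφ₀'
    exact hφ₀' rfl
  haveI : Nontrivial (Submodule Γᵐᵒᵖ (T →ₗ[R] R)) := ⟨⊥, ⊤, hbotne⟩
  refine { toIsSimpleOrder := ⟨fun W => ?_⟩ }
  by_cases hWbot : W = ⊥
  · exact Or.inl hWbot
  right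
  obtain ⟨φ₀, hφ₀W, hφ₀⟩ := Submodule.exists_mem_ne_zero_of_ne_bot hWbot
  -- the joint kernel of W
  set K : Submodule Γ T :=
    { carrier := {s : T | ∀ φ ∈ W, φ s = 0}
      add_mem' := fun {s₁ s₂} h₁ h₂ φ hφ => by
        rw [map_add, h₁ φ hφ, h₂ φ hφ, add_zero]
      zero_mem' := fun φ _ => map_zero φ
      smul_mem' := by
        intro γ s hs φ hφ
        have h1 : φ (γ • s) = ((op γ) • φ) s := rfl
        rw [h1]
        exact hs _ (W.smul_mem (op γ) hφ) } with hK
  have hKne : K ≠ ⊤ := by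
    obtain ⟨s, hs⟩ := DFunLike.ne_iff.mp hφ₀
    intro h
    have : s ∈ K := by rw [h]; trivial
    exact hs (by simpa using this φ₀ hφ₀W)
  have hKbot : K = ⊥ := (hT.1.2 K).resolve_right hKne
  by_contra hWtop
  -- W as an R-subspace
  set WR : Submodule R (T →ₗ[R] R) :=
    { carrier := W
      add_mem' := fun h₁ h₂ => W.add_mem h₁ h₂
      zero_mem' := W.zero_mem
      smul_mem' := by
        intro r φ hφ
        have h1 : r • φ = (op (algebraMap R Γ r)) • φ := by
          ext t
          rw [LinearMap.smul_apply, dualL_smul_apply, unop_op, algebraMap_smul, map_smul]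
        rw [h1]
        exact W.smul_mem _ hφ } with hWR
  obtain ⟨ψ₀, hψ₀⟩ : ∃ ψ : T →ₗ[R] R, ψ ∉ W := by
    by_contra hc
    push_neg at hc
    exact hWtop (Submodule.eq_top_iff'.mpr hc)
  have hWRlt : WR < ⊤ := by
    rw [lt_top_iff_ne_top]
    intro h
    apply hψ₀
    have : ψ₀ ∈ WR := by rw [h]; trivial
    exact this
  haveI : Nontrivial ((T →ₗ[R] R) ⧸ WR) := Submodule.Quotient.nontrivial_iff.mpr hWRlt.ne
  obtain ⟨v, hv⟩ := exists_ne (0 : (T →ₗ[R] R) ⧸ WR)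
  obtain ⟨χ, hχ⟩ : ∃ χ : Module.Dual R ((T →ₗ[R] R) ⧸ WR), χ v ≠ 0 := by
    by_contra hc
    push_neg at hc
    exact hv ((Module.forall_dual_apply_eq_zero_iff R v).mp hc)
  set Φ : Module.Dual R (Module.Dual R T) := χ ∘ₗ WR.mkQ with hΦ
  set s₀ : T := (Module.evalEquiv R T).symm Φ with hs₀
  have hev : Module.Dual.eval R T s₀ = Φ := by
    rw [← Module.evalEquiv_toLinearMap]
    exact (Module.evalEquiv R T).apply_symm_apply Φ
  have hs₀K : s₀ ∈ K := by
    intro φ hφ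
    have h1 : φ s₀ = (Module.Dual.eval R T s₀) φ := rfl
    rw [h1, hev, hΦ]
    show χ (WR.mkQ φ) = 0
    have : WR.mkQ φ = 0 := by
      rw [Submodule.mkQ_apply, Submodule.Quotient.mk_eq_zero]
      exact hφ
    rw [this, map_zero]
  have hs₀0 : s₀ = 0 := by rw [hKbot] at hs₀K; simpa using hs₀K
  obtain ⟨d, hd⟩ := WR.mkQ_surjective v
  have : Φ d ≠ 0 := by
    rw [hΦ]
    show χ (WR.mkQ d) ≠ 0
    rw [hd]
    exact hχ
  apply this
  rw [← hev, hs₀0, map_zero]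
  rfl

/-- If `S` is an injective `Γ`-module (finite over the base field), its `R`-dual is a
projective `Γᵐᵒᵖ`-module. -/
theorem dualL_projective [Module.Finite R Γ] [Small.{0} Γ] [Small.{0} R]
    (S : Type) [AddCommGroup S] [Module Γ S] [Module R S] [IsScalarTower R Γ S]
    [Module.Finite R S] (hInj : Module.Injective Γ S) :
    Module.Projective Γᵐᵒᵖ (S →ₗ[R] R) := by
  haveI : Module.Finite R Γᵐᵒᵖ :=
    Module.Finite.equiv (MulOpposite.opLinearEquiv R : Γ ≃ₗ[R] Γᵐᵒᵖ)
  haveI : Small.{0} Γᵐᵒᵖ := small_of_injective (f := (unop : Γᵐᵒᵖ → Γ)) unop_injective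
  haveI : Module.Finite R (S →ₗ[R] R) := inferInstance
  haveI : Module.Finite Γᵐᵒᵖ (S →ₗ[R] R) :=
    Module.Finite.of_restrictScalars_finite R Γᵐᵒᵖ (S →ₗ[R] R)
  obtain ⟨k, π, hπ⟩ := Module.Finite.exists_fin' Γᵐᵒᵖ (S →ₗ[R] R)
  -- the finite free right module F
  set F := Fin k → Γᵐᵒᵖ with hF
  haveI : Small.{0} F := by infer_instance
  haveI : Small.{0} (F →ₗ[R] R) :=
    small_of_injective (f := fun (φ : F →ₗ[R] R) => (φ : F → R)) DFunLike.coe_injective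
  -- i : S → dual of F
  set i : S →ₗ[Γ] (F →ₗ[R] R) := (homDualR (Γ := Γ) R π) ∘ₗ (evL R S) with hi
  have hiinj : Function.Injective i := by
    intro s₁ s₂ h12
    have h3 : ∀ φ : S →ₗ[R] R, φ s₁ = φ s₂ := by
      intro φ
      obtain ⟨x, rfl⟩ := hπ φ
      have := congrArg (fun Φ : F →ₗ[R] R => Φ x) h12
      exact this
    by_contra hne
    have : s₁ - s₂ ≠ 0 := sub_ne_zero_of_ne hne
    apply this
    rw [← Module.forall_dual_apply_eq_zero_iff (R := R)]
    intro φ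
    rw [map_sub, h3 φ, sub_self]
  obtain ⟨ρ, hρ⟩ := Module.Injective.extends_of_small hInj i hiinj LinearMap.id
  -- σ := evF⁻¹ ∘ dual of ρ
  haveI : Module.Finite R F := by infer_instance
  have hevFbij : Function.Bijective (evR (Γ := Γ) R F) := by
    have : Function.Bijective (Module.Dual.eval R F) := (Module.evalEquiv R F).bijective
    exact this
  set evFequiv := LinearEquiv.ofBijective (evR (Γ := Γ) R F) hevFbij with hevF
  set σ : (S →ₗ[R] R) →ₗ[Γᵐᵒᵖ] F := evFequiv.symm.toLinearMap ∘ₗ homDualL (Γ := Γ) R ((F →ₗ[R] R)) ρ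
    with hσ
  have hπσ : π ∘ₗ σ = LinearMap.id := by
    ext d s
    simp only [LinearMap.comp_apply, LinearMap.id_apply]
    set z : F := σ d with hz
    have hzev : evR (Γ := Γ) R F z = homDualL (Γ := Γ) R ((F →ₗ[R] R)) ρ d := by
      rw [hz, hσ]
      exact evFequiv.apply_symm_apply _
    have h1 : ∀ Φ : F →ₗ[R] R, Φ z = d (ρ Φ) := by
      intro Φ
      have := congrArg (fun X : (F →ₗ[R] R) →ₗ[R] R => X Φ) hzev
      simpa using this
    have h2 : (π z) s = (i s) z := rfl
    rw [h2]
    have h3 : (i s) z = (i s) z := rfl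
    have h4 : (i s : F →ₗ[R] R) z = d (ρ (i s)) := h1 (i s)
    rw [h4, hρ s]
    rfl
  exact Module.Projective.of_split σ π hπσ

end DualTransfer

theorem small_of_findim {R : Type*} [Field R] [Small.{0} R] (V : Type*) [AddCommGroup V]
    [Module R V] [Module.Finite R V] : Small.{0} V := by
  have b := Module.finBasis R V
  exact small_of_injective b.equivFun.toEquiv.injective

/-- Let `R` be a field, `f ∈ R[x]` irreducible, `n ≥ 2`,
`A := R[x]/(f^n)`, `M` a finitely generated generator for `A`-mod, and `Λ := End_A(M)`.
Then no simple `Λ`-module is projective and no simple `Λ`-module is injective. -/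
theorem stmt12 (R : Type*) [Field R] (f : Polynomial R) (hf : Irreducible f)
    (n : ℕ) (hn : 2 ≤ n)
    (M : Type*) [AddCommGroup M] [Module (Polynomial R ⧸ Ideal.span {f ^ n}) M]
    [Module.Finite (Polynomial R ⧸ Ideal.span {f ^ n}) M]
    (hgen : ∃ (k : ℕ) (g : (Fin k → M) →ₗ[Polynomial R ⧸ Ideal.span {f ^ n}]
      (Polynomial R ⧸ Ideal.span {f ^ n})), Function.Surjective g) :
    ∀ (S : Type) [AddCommGroup S]
      [Module (Module.End (Polynomial R ⧸ Ideal.span {f ^ n}) M) S],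
      IsSimpleModule (Module.End (Polynomial R ⧸ Ideal.span {f ^ n}) M) S →
        ¬ Module.Projective (Module.End (Polynomial R ⧸ Ideal.span {f ^ n}) M) S ∧
        ¬ Module.Injective (Module.End (Polynomial R ⧸ Ideal.span {f ^ n}) M) S := by
  intro S _ _ hS
  obtain ⟨g, m₀, hgm₀⟩ := quotA_gen f n hf hn hgen
  constructor
  · intro hP
    obtain ⟨e, hee, hene, hsimple⟩ := exists_idempotent_of_simple_projective hS hP
    exact core_left (Ideal.Quotient.mk (Ideal.span {f ^ n}) f) hn (quotA_pow_eq_zero f n)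
      (quotA_max f n hf hn) (quotA_ann f n hf hn) g m₀ hgm₀ e hee hene hsimple
  · intro hI
    -- Notation
    haveI hSnt : Nontrivial S :=
      IsSimpleModule.nontrivial (Module.End (Polynomial R ⧸ Ideal.span {f ^ n}) M) S
    obtain ⟨s₀, hs₀⟩ := exists_ne (0 : S)
    -- R-module structures
    haveI : Module.Finite R (Polynomial R ⧸ Ideal.span {f ^ n}) := by
      have hfn : f ^ n ≠ 0 := pow_ne_zero n hf.ne_zero
      exact Module.Finite.of_basis (AdjoinRoot.powerBasis hfn).basis
    set ρRΛ : R →+* Module.End (Polynomial R ⧸ Ideal.span {f ^ n}) M :=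
      (algebraMap (Polynomial R ⧸ Ideal.span {f ^ n})
        (Module.End (Polynomial R ⧸ Ideal.span {f ^ n}) M)).comp
        (algebraMap R (Polynomial R ⧸ Ideal.span {f ^ n})) with hρRΛ
    letI algRΛ : Algebra R (Module.End (Polynomial R ⧸ Ideal.span {f ^ n}) M) :=
      RingHom.toAlgebra' ρRΛ (fun r γ => by
        rw [hρRΛ, RingHom.comp_apply]
        exact Algebra.commutes _ γ)
    letI modRS : Module R S := Module.compHom S ρRΛ
    have hRsmulS : ∀ (r : R) (x : S), r • x = ρRΛ r • x := fun _ _ => rfl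
    letI towRΛS : IsScalarTower R (Module.End (Polynomial R ⧸ Ideal.span {f ^ n}) M) S :=
      IsScalarTower.of_algebraMap_smul (fun r x => (hRsmulS r x).symm)
    letI modRM : Module R M := Module.compHom M (algebraMap R (Polynomial R ⧸ Ideal.span {f ^ n}))
    have hRsmulM : ∀ (r : R) (x : M),
        r • x = (algebraMap R (Polynomial R ⧸ Ideal.span {f ^ n})) r • x := fun _ _ => rfl
    letI towRAM : IsScalarTower R (Polynomial R ⧸ Ideal.span {f ^ n}) M :=
      IsScalarTower.of_algebraMap_smul (fun r x => (hRsmulM r x).symm)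
    haveI : Module.Finite R M := Module.Finite.trans (Polynomial R ⧸ Ideal.span {f ^ n}) M
    -- Λ is finite dimensional over R
    have hj : ∃ j : (Module.End (Polynomial R ⧸ Ideal.span {f ^ n}) M) →ₗ[R] (M →ₗ[R] M),
        Function.Injective j := by
      refine ⟨{ toFun := fun γ => restrictRL R M γ
                map_add' := fun γ₁ γ₂ => by ext m; rfl
                map_smul' := fun r γ => by
                  ext m
                  show (r • γ) m = r • (γ m)
                  rw [Algebra.smul_def]
                  show (ρRΛ r) (γ m) = r • (γ m)
                  rw [hρRΛ]
                  show (algebraMap (Polynomial R ⧸ Ideal.span {f ^ n})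
                    (Module.End (Polynomial R ⧸ Ideal.span {f ^ n}) M)
                    ((algebraMap R (Polynomial R ⧸ Ideal.span {f ^ n})) r)) (γ m) = r • (γ m)
                  rw [Module.algebraMap_end_apply, hRsmulM] }, ?_⟩
      intro γ₁ γ₂ h12
      ext m
      exact congrArg (fun φ : M →ₗ[R] M => φ m) h12
    obtain ⟨j, hjinj⟩ := hj
    haveI : Module.Finite R (Module.End (Polynomial R ⧸ Ideal.span {f ^ n}) M) :=
      FiniteDimensional.of_injective j hjinj
    -- smallness
    haveI : Small.{0} R := by
      refine small_of_injective (f := fun r : R => r • s₀) ?_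
      intro r₁ r₂ h12
      have h12' : r₁ • s₀ = r₂ • s₀ := h12
      by_contra hne
      have hu : r₁ - r₂ ≠ 0 := sub_ne_zero_of_ne hne
      apply hs₀
      have h3 : (r₁ - r₂) • s₀ = 0 := by rw [sub_smul, h12', sub_self]
      have h4 : (r₁ - r₂)⁻¹ • ((r₁ - r₂) • s₀) = s₀ := by
        rw [smul_smul, inv_mul_cancel₀ hu, one_smul]
      rw [h3, smul_zero] at h4
      exact h4.symm
    haveI : Small.{0} (Module.End (Polynomial R ⧸ Ideal.span {f ^ n}) M) :=
      small_of_findim (R := R) _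
    -- S is finite dimensional over R
    haveI : Module.Finite R S := by
      have hspan : span (Module.End (Polynomial R ⧸ Ideal.span {f ^ n}) M) ({s₀} : Set S) = ⊤ := by
        rcases hS.1.2 (span _ {s₀}) with h | h
        · exfalso
          apply hs₀
          have : s₀ ∈ span (Module.End (Polynomial R ⧸ Ideal.span {f ^ n}) M) ({s₀} : Set S) :=
            mem_span_singleton_self s₀
          rw [h] at this
          simpa using this
        · exact h
      refine Module.Finite.of_surjective
        ({ toFun := fun γ : Module.End (Polynomial R ⧸ Ideal.span {f ^ n}) M => γ • s₀
           map_add' := fun γ₁ γ₂ => add_smul γ₁ γ₂ s₀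
           map_smul' := fun r γ => by
             show (r • γ) • s₀ = r • (γ • s₀)
             rw [Algebra.smul_def, mul_smul, hRsmulS]
             rfl } : _ →ₗ[R] S) ?_
      intro s
      have : s ∈ span (Module.End (Polynomial R ⧸ Ideal.span {f ^ n}) M) ({s₀} : Set S) := by
        rw [hspan]; trivial
      rw [mem_span_singleton] at this
      obtain ⟨γ, hγ⟩ := this
      exact ⟨γ, hγ⟩
    -- dual transfer
    have hDsimple : IsSimpleModule (Module.End (Polynomial R ⧸ Ideal.span {f ^ n}) M)ᵐᵒᵖ
        (S →ₗ[R] R) := dualL_simple S hS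
    have hDproj : Module.Projective (Module.End (Polynomial R ⧸ Ideal.span {f ^ n}) M)ᵐᵒᵖ
        (S →ₗ[R] R) := dualL_projective S hI
    obtain ⟨ζ, hζζ, hζne, hsimple'⟩ := exists_idempotent_of_simple_projective hDsimple hDproj
    have hee : (unop ζ) * (unop ζ) = unop ζ := by
      have := congrArg unop hζζ
      rwa [unop_mul] at this
    have hene : unop ζ ≠ 0 := by
      intro h
      apply hζne
      rw [← op_unop ζ, h, op_zero]
    have hsimple'' : IsSimpleModule (Module.End (Polynomial R ⧸ Ideal.span {f ^ n}) M)ᵐᵒᵖ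
        (span (Module.End (Polynomial R ⧸ Ideal.span {f ^ n}) M)ᵐᵒᵖ
          ({op (unop ζ)} : Set (Module.End (Polynomial R ⧸ Ideal.span {f ^ n}) M)ᵐᵒᵖ)) := by
      rw [op_unop]
      exact hsimple'
    exact core_right (Ideal.Quotient.mk (Ideal.span {f ^ n}) f) hn (quotA_pow_eq_zero f n)
      (quotA_max f n hf hn) (quotA_ann f n hf hn) g m₀ hgm₀ (unop ζ) hee hene hsimple''
end

section
/- Let R be a field of characteristic p ≥ 0 and σ ∈ Σ_n a permutation with permutation matrix c_σ ∈ M_n(R). Then the centralizer algebra S_n(c_σ, R) is semisimple if and only if σ equals its p-regular part r(σ), i.e., if and only if p does not divide the length of any cycle of σ (with the convention that for p = 0 every permutation is p-regular). -/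
open Polynomial

section Aux

variable {K : Type*} [Field K] {n : ℕ}

theorem stmt13_permMatrix_one : ((1 : Equiv.Perm (Fin n)).permMatrix K) = 1 := by
  simp [Equiv.Perm.permMatrix, Equiv.Perm.one_def, Equiv.toPEquiv_refl]

theorem stmt13_permMatrix_pow (σ : Equiv.Perm (Fin n)) (k : ℕ) :
    (σ.permMatrix K) ^ k = (σ ^ k).permMatrix K := by
  induction k with
  | zero => simp [stmt13_permMatrix_one]
  | succ k ih =>
    rw [pow_succ, ih, Equiv.Perm.permMatrix, Equiv.Perm.permMatrix,
      ← PEquiv.toMatrix_trans, ← Equiv.toPEquiv_trans]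
    rw [pow_succ']
    rfl

theorem stmt13_permMatrix_eq_one_iff (τ : Equiv.Perm (Fin n)) :
    (τ.permMatrix K) = 1 ↔ τ = 1 := by
  constructor
  · intro h
    have h1 : τ.toPEquiv.toMatrix = ((1 : Equiv.Perm (Fin n)).toPEquiv.toMatrix : Matrix (Fin n) (Fin n) K) := by
      rw [← Equiv.Perm.permMatrix, ← Equiv.Perm.permMatrix, h, stmt13_permMatrix_one]
    have h2 := PEquiv.toMatrix_injective h1
    ext x
    have h3 := congrArg (fun p : Fin n ≃. Fin n => p x) h2
    simp only [Equiv.toPEquiv_apply, Option.some.injEq] at h3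
    exact congrArg Fin.val h3
  · rintro rfl; exact stmt13_permMatrix_one

theorem stmt13_prime_dvd_lcm {p : ℕ} (hp : p.Prime) (s : Multiset ℕ) (h : p ∣ s.lcm) :
    ∃ l ∈ s, p ∣ l := by
  induction s using Multiset.induction with
  | empty => simp [Multiset.lcm_zero, Nat.dvd_one] at h; exact absurd h hp.ne_one
  | cons a t ih =>
    rw [Multiset.lcm_cons] at h
    have h2 : p ∣ a * t.lcm := by rw [lcm_eq_nat_lcm] at h; exact h.trans (Nat.lcm_dvd_mul a t.lcm)
    rcases hp.dvd_mul.mp h2 with h3 | h3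
    · exact ⟨a, Multiset.mem_cons_self a t, h3⟩
    · obtain ⟨l, hl, hpl⟩ := ih h3
      exact ⟨l, Multiset.mem_cons_of_mem hl, hpl⟩

end Aux

open Polynomial
section
variable {K : Type*} [Field K] {n : ℕ}

set_option synthInstance.maxHeartbeats 1000000 in
set_option maxHeartbeats 1600000 in
theorem stmt13_forward (σ : Equiv.Perm (Fin n))
    (hss : IsSemisimpleRing (Subalgebra.centralizer K {σ.permMatrix K} :
        Subalgebra K (Matrix (Fin n) (Fin n) K))) :
    ∀ l ∈ σ.cycleType, ¬ (ringChar K ∣ l) := by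
  intro l hl hdvd
  set p := ringChar K with hpdef
  have hl2 : 2 ≤ l := Equiv.Perm.two_le_of_mem_cycleType hl
  have hp0 : p ≠ 0 := by
    intro hzero
    rw [hzero, zero_dvd_iff] at hdvd
    omega
  haveI : CharP K p := ringChar.charP K
  have hpprime : p.Prime := (CharP.char_is_prime_or_zero K p).resolve_right hp0
  haveI : Fact p.Prime := ⟨hpprime⟩
  haveI : Nonempty (Fin n) := by
    rcases n with _ | n
    · exfalso
      have : σ = 1 := Subsingleton.elim _ _
      rw [this, Equiv.Perm.cycleType_one] at hl
      simp at hl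
    · exact ⟨0⟩
  set m := orderOf σ with hmdef
  have hm0 : m ≠ 0 := (orderOf_pos σ).ne'
  have hlm : l ∣ m := by
    rw [hmdef, ← Equiv.Perm.lcm_cycleType]
    exact Multiset.dvd_lcm hl
  have hpm : p ∣ m := hdvd.trans hlm
  set k := m / p with hkdef
  have hk : k * p = m := Nat.div_mul_cancel hpm
  have hklt : k < m := Nat.div_lt_self (Nat.pos_of_ne_zero hm0) hpprime.one_lt
  have hk0 : k ≠ 0 := by
    intro hzero
    rw [hzero, zero_mul] at hk
    exact hm0 hk.symm
  set c := σ.permMatrix K with hcdef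
  set C := (Subalgebra.centralizer K {σ.permMatrix K} : Subalgebra K (Matrix (Fin n) (Fin n) K))
    with hCdef
  have hck : c ^ k ≠ 1 := by
    rw [hcdef, stmt13_permMatrix_pow]
    intro h
    have h' := (stmt13_permMatrix_eq_one_iff (σ ^ k)).mp h
    have : m ∣ k := orderOf_dvd_iff_pow_eq_one.mpr h'
    exact absurd (Nat.le_of_dvd (Nat.pos_of_ne_zero hk0) this) (not_le.mpr hklt)
  have hcm : c ^ m = 1 := by
    rw [hcdef, stmt13_permMatrix_pow, hmdef, pow_orderOf_eq_one, stmt13_permMatrix_one]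
  have hc_mem : c ∈ C := by
    rw [hCdef, Subalgebra.mem_centralizer_iff]
    rintro x rfl
    rfl
  set ξ : C := ⟨c ^ k - 1, sub_mem (pow_mem hc_mem k) (one_mem C)⟩ with hξdef
  have hξ0 : ξ ≠ 0 := by
    intro h
    apply sub_ne_zero.mpr hck
    exact congrArg Subtype.val h
  have hcommb : ∀ b : C, Commute b ξ := by
    intro b
    have h1 : Commute c (b : Matrix (Fin n) (Fin n) K) :=
      (Subalgebra.mem_centralizer_iff K).mp b.2 c rfl
    have h2 : Commute (b : Matrix (Fin n) (Fin n) K) (c ^ k - 1) :=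
      ((h1.symm.pow_right k).sub_right (Commute.one_right _))
    exact Subtype.ext h2
  have hξp : ξ ^ p = 0 := by
    apply Subtype.ext
    show (c ^ k - 1) ^ p = 0
    rw [sub_pow_char_of_commute p (Commute.one_right _), one_pow, ← pow_mul, hk, hcm, sub_self]
  haveI := hss
  obtain ⟨e, he, hIe⟩ := IsSemisimpleRing.ideal_eq_span_idempotent (Ideal.span {ξ})
  have he' : e ∈ Ideal.span ({ξ} : Set C) := by
    rw [hIe]; exact Ideal.subset_span rfl
  obtain ⟨b, hb⟩ := Submodule.mem_span_singleton.mp he'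
  have hep : ∀ j : ℕ, e ^ (j + 1) = e := by
    intro j
    induction j with
    | zero => exact pow_one e
    | succ j ih => rw [pow_succ, ih, he]
  have he0 : e = 0 := by
    have : e = e ^ p := by
      conv_lhs => rw [← hep (p - 1)]
      congr 1
      omega
    rw [this, ← hb, smul_eq_mul, (hcommb b).mul_pow, hξp, mul_zero]
  rw [he0] at hIe
  have : ξ ∈ Ideal.span ({ξ} : Set C) := Ideal.subset_span rfl
  rw [hIe] at this
  simp only [Ideal.span_singleton_eq_bot.mpr rfl, Ideal.mem_bot] at this
  exact hξ0 this
end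

open Polynomial

theorem stmt13_pi_isSemisimpleModule {C : Type*} [Ring C] {ι : Type*} [Finite ι] [DecidableEq ι]
    (V : ι → Type*) [∀ i, AddCommGroup (V i)] [∀ i, Module C (V i)]
    [∀ i, IsSemisimpleModule C (V i)] : IsSemisimpleModule C (∀ i, V i) :=
  isSemisimpleModule_of_isSemisimpleModule_submodule'
    (p := fun i => LinearMap.range (LinearMap.single C V i))
    (fun _ => IsSemisimpleModule.range _)
    (by simp_rw [LinearMap.range_eq_map, Submodule.iSup_map_single, Submodule.pi_top])

theorem stmt13_coe_aeval_restrict {R M : Type*} [CommRing R] [AddCommGroup M] [Module R M]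
    (f : M →ₗ[R] M) (p : Submodule R M) (hst : ∀ x ∈ p, f x ∈ p) (r : R[X]) (x : p) :
    ((aeval (f.restrict hst) r) x : M) = aeval f r (x : M) := by
  rw [aeval_endomorphism, aeval_endomorphism, Polynomial.sum_def, Polynomial.sum_def]
  rw [Submodule.coe_sum]
  refine Finset.sum_congr rfl fun i _ => ?_
  rw [Submodule.coe_smul]
  congr 1
  rw [Module.End.pow_restrict i hst, LinearMap.restrict_apply]

theorem stmt13_ker_aeval_prod {K : Type*} [Field K] {V : Type*} [AddCommGroup V] [Module K V]
    (f : V →ₗ[K] V) (s : Finset K[X])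
    (hcop : ∀ a ∈ s, ∀ b ∈ s, a ≠ b → IsCoprime a b) :
    LinearMap.ker (aeval f (∏ g ∈ s, g)) = ⨆ g ∈ s, LinearMap.ker (aeval f g) := by
  classical
  induction s using Finset.induction with
  | empty => simp [Module.End.one_eq_id]
  | insert a t hnotmem ih =>
    have hcop' : ∀ x ∈ t, ∀ y ∈ t, x ≠ y → IsCoprime x y := fun x hx y hy =>
      hcop x (Finset.mem_insert_of_mem hx) y (Finset.mem_insert_of_mem hy)
    have hat : IsCoprime a (∏ g ∈ t, g) := by
      apply IsCoprime.prod_right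
      intro b hb
      exact hcop a (Finset.mem_insert_self a t) b (Finset.mem_insert_of_mem hb)
        (fun h => hnotmem (h ▸ hb))
    rw [Finset.prod_insert hnotmem, ← Polynomial.sup_ker_aeval_eq_ker_aeval_mul_of_coprime f hat,
      ih hcop', Finset.iSup_insert]

theorem stmt13_semisimple_of_linear_inj {R M : Type*} [Ring R] [AddCommGroup M] [Module R M]
    [IsSemisimpleModule R M] (f : R →ₗ[R] M) (hf : Function.Injective f) :
    IsSemisimpleRing R :=
  IsSemisimpleModule.congr (LinearEquiv.ofInjective f hf)

open Polynomial

set_option synthInstance.maxHeartbeats 1000000 in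
set_option maxHeartbeats 3200000 in
theorem stmt13_exists_centralizer_smul {K : Type*} [Field K] {n : ℕ}
    (c : Matrix (Fin n) (Fin n) K) (g h : K[X]) (hgirr : Irreducible g) (hcop : IsCoprime g h)
    (hann : aeval c (g * h) = 0) (v w : Fin n → K)
    (hv : aeval (Matrix.toLinAlgEquiv' c) g v = 0)
    (hw : aeval (Matrix.toLinAlgEquiv' c) g w = 0) (hv0 : v ≠ 0) :
    ∃ a : Matrix (Fin n) (Fin n) K, a ∈ Subalgebra.centralizer K {c} ∧
      Matrix.toLinAlgEquiv' a v = w := by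
  classical
  set T := (Matrix.toLinAlgEquiv' : Matrix (Fin n) (Fin n) K ≃ₐ[K] Module.End K (Fin n → K))
    with hT
  set f := T c with hf
  have hcomm0 : ∀ r : K[X], (aeval f r) * f = f * aeval f r := by
    intro r
    have h1 : aeval f r * aeval f (X : K[X]) = aeval f (X : K[X]) * aeval f r := by
      rw [← map_mul (aeval f), ← map_mul (aeval f), mul_comm]
    simpa [aeval_X] using h1
  have hannf : aeval f (g * h) = 0 := by
    have h1 := Polynomial.aeval_algHom_apply (R := K)
      (T : Matrix (Fin n) (Fin n) K →ₐ[K] Module.End K (Fin n → K)) c (g * h)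
    rw [show f = (T : Matrix (Fin n) (Fin n) K →ₐ[K] Module.End K (Fin n → K)) c from rfl,
      h1, hann, map_zero]
  set W := LinearMap.ker (aeval f g) with hW
  set U := LinearMap.ker (aeval f h) with hU
  have hWU : IsCompl W U := by
    constructor
    · exact Polynomial.disjoint_ker_aeval_of_isCoprime f hcop
    · rw [codisjoint_iff, hW, hU, Polynomial.sup_ker_aeval_eq_ker_aeval_mul_of_coprime f hcop,
        hannf]
      exact LinearMap.ker_zero
  have hWst : ∀ x ∈ W, f x ∈ W := by
    intro x hx
    rw [hW, LinearMap.mem_ker] at hx ⊢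
    have h2 := congrArg (fun ℓ : Module.End K (Fin n → K) => ℓ x) (hcomm0 g)
    simp only [Module.End.mul_apply] at h2
    rw [h2, hx, map_zero]
  have hUst : ∀ x ∈ U, f x ∈ U := by
    intro x hx
    rw [hU, LinearMap.mem_ker] at hx ⊢
    have h2 := congrArg (fun ℓ : Module.End K (Fin n → K) => ℓ x) (hcomm0 h)
    simp only [Module.End.mul_apply] at h2
    rw [h2, hx, map_zero]
  set f' := f.restrict hWst with hf'
  have hf'g : aeval f' g = 0 := by
    apply LinearMap.ext
    intro x
    have h1 := stmt13_coe_aeval_restrict f W hWst g x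
    exact (Submodule.coe_eq_zero).mp (by rw [h1]; exact LinearMap.mem_ker.mp x.2)
  haveI : Fact (Irreducible g) := ⟨hgirr⟩
  have hvan : ∀ a ∈ Ideal.span ({g} : Set K[X]), (aeval f').toRingHom a = 0 := by
    intro a ha
    obtain ⟨t, rfl⟩ := Ideal.mem_span_singleton.mp ha
    show aeval f' (g * t) = 0
    rw [map_mul, hf'g, zero_mul]
  set L := AdjoinRoot g with hL
  set ρ : L →+* Module.End K ↥W :=
    Ideal.Quotient.lift (Ideal.span ({g} : Set K[X])) (aeval f').toRingHom hvan with hρ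
  letI : Module L ↥W := Module.compHom _ ρ
  have hsmulL : ∀ (z : L) (x : ↥W), z • x = ρ z x := fun z x => rfl
  have hmk : ∀ r : K[X], ρ (AdjoinRoot.mk g r) = aeval f' r := fun r => rfl
  have hKL : ∀ (kk : K) (x : ↥W), (AdjoinRoot.of g kk) • x = kk • x := by
    intro kk x
    rw [hsmulL]
    show ρ (AdjoinRoot.mk g (C kk)) x = kk • x
    rw [hmk, aeval_C]
    exact Module.algebraMap_end_apply K K ↥W kk x
  have hXL : ∀ x : ↥W, (AdjoinRoot.root g) • x = f' x := by
    intro x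
    rw [hsmulL]
    show ρ (AdjoinRoot.mk g X) x = f' x
    rw [hmk, aeval_X]
  set v' : ↥W := ⟨v, LinearMap.mem_ker.mpr hv⟩ with hv'
  set w' : ↥W := ⟨w, LinearMap.mem_ker.mpr hw⟩ with hw'
  have hv'0 : v' ≠ 0 := fun hz => hv0 (congrArg Subtype.val hz)
  obtain ⟨Uc, hUc⟩ := Submodule.exists_isCompl (Submodule.span L {v'})
  set π₁ := (Submodule.span L {v'}).linearProjOfIsCompl Uc hUc with hπ₁
  set e := LinearEquiv.toSpanNonzeroSingleton L ↥W v' hv'0 with he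
  set ψ : ↥W →ₗ[L] ↥W := (LinearMap.toSpanSingleton L ↥W w') ∘ₗ
    (e.symm : (Submodule.span L {v'}) →ₗ[L] L) ∘ₗ π₁ with hψ
  have hψv : ψ v' = w' := by
    rw [hψ]
    simp only [LinearMap.comp_apply, LinearEquiv.coe_coe]
    have h1 : π₁ v' = ⟨v', Submodule.mem_span_singleton_self v'⟩ :=
      Submodule.linearProjOfIsCompl_apply_left hUc ⟨v', Submodule.mem_span_singleton_self v'⟩
    have h2 : e.symm ⟨v', Submodule.mem_span_singleton_self v'⟩ = 1 := by
      rw [LinearEquiv.symm_apply_eq]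
      exact (LinearEquiv.toSpanNonzeroSingleton_one L ↥W v' hv'0).symm
    rw [h1, h2, LinearMap.toSpanSingleton_apply, one_smul]
  have hψf : ∀ x, ψ (f' x) = f' (ψ x) := by
    intro x; rw [← hXL, ← hXL, map_smul]
  set ψK : ↥W →ₗ[K] ↥W :=
    { toFun := fun x => ψ x,
      map_add' := fun a b => map_add ψ a b,
      map_smul' := by
        intro kk x
        simp only [RingHom.id_apply]
        rw [← hKL, ← hKL, map_smul] } with hψK
  set π := W.linearProjOfIsCompl U hWU with hπ
  set aE : Module.End K (Fin n → K) := W.subtype ∘ₗ ψK ∘ₗ π with haE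
  have haEW : ∀ (x) (hx : x ∈ W), aE x = ↑(ψ ⟨x, hx⟩) := by
    intro x hx
    rw [haE]
    simp only [LinearMap.comp_apply]
    rw [show π x = ⟨x, hx⟩ from Submodule.linearProjOfIsCompl_apply_left hWU ⟨x, hx⟩]
    rfl
  have haEU : ∀ x ∈ U, aE x = 0 := by
    intro x hx
    rw [haE]
    simp only [LinearMap.comp_apply]
    rw [show π x = 0 from Submodule.linearProjOfIsCompl_apply_right hWU ⟨x, hx⟩]
    simp
  have hcommA : aE * f = f * aE := by
    apply LinearMap.ext
    intro x
    have hx : x ∈ W ⊔ U := by rw [codisjoint_iff.mp hWU.codisjoint]; trivial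
    obtain ⟨xw, hxw, xu, hxu, rfl⟩ := Submodule.mem_sup.mp hx
    have h1 : aE (f xw) = f (aE xw) := by
      rw [haEW _ hxw, haEW _ (hWst _ hxw)]
      have e1 : (⟨f xw, hWst _ hxw⟩ : ↥W) = f' ⟨xw, hxw⟩ :=
        Subtype.ext (by rw [LinearMap.restrict_coe_apply])
      rw [e1, hψf, LinearMap.restrict_coe_apply]
    have h2 : aE (f xu) = f (aE xu) := by
      rw [haEU _ (hUst _ hxu), haEU _ hxu, map_zero]
    simp only [Module.End.mul_apply, map_add, h1, h2]
  refine ⟨T.symm aE, ?_, ?_⟩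
  · rw [Subalgebra.mem_centralizer_iff]
    rintro x rfl
    apply T.injective
    rw [map_mul, map_mul, AlgEquiv.apply_symm_apply, ← hf, hcommA]
  · show T (T.symm aE) v = w
    rw [AlgEquiv.apply_symm_apply, haEW v (LinearMap.mem_ker.mpr hv)]
    exact congrArg Subtype.val hψv

open Polynomial UniqueFactorizationMonoid

set_option synthInstance.maxHeartbeats 1000000 in
set_option maxHeartbeats 6400000 in
theorem stmt13_centralizer_semisimple {K : Type*} [Field K] {n : ℕ}
    (c : Matrix (Fin n) (Fin n) K) (q : K[X]) (hq : Squarefree q) (hann : aeval c q = 0) :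
    IsSemisimpleRing (Subalgebra.centralizer K ({c} : Set (Matrix (Fin n) (Fin n) K))) := by
  classical
  set T := (Matrix.toLinAlgEquiv' : Matrix (Fin n) (Fin n) K ≃ₐ[K] Module.End K (Fin n → K))
    with hT
  set f := T c with hf
  set C := Subalgebra.centralizer K ({c} : Set (Matrix (Fin n) (Fin n) K)) with hC
  letI : Module ↥C (Fin n → K) :=
    Module.compHom _ (((T : Matrix (Fin n) (Fin n) K →ₐ[K] Module.End K (Fin n → K)) :
      Matrix (Fin n) (Fin n) K →+* Module.End K (Fin n → K)).comp
        ((Subalgebra.val C : ↥C →ₐ[K] Matrix (Fin n) (Fin n) K) :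
          ↥C →+* Matrix (Fin n) (Fin n) K))
  have hsmul : ∀ (a : ↥C) (v : Fin n → K),
      a • v = T (a : Matrix (Fin n) (Fin n) K) v := fun a v => rfl
  have hcomm : ∀ (a : ↥C) (r : K[X]),
      (aeval f r) * (T (a : Matrix (Fin n) (Fin n) K)) =
        (T (a : Matrix (Fin n) (Fin n) K)) * (aeval f r) := by
    intro a r
    have h2 : c * (a : Matrix (Fin n) (Fin n) K) = (a : Matrix (Fin n) (Fin n) K) * c :=
      (Subalgebra.mem_centralizer_iff K).mp a.2 c rfl
    have h1 : (T (a : Matrix (Fin n) (Fin n) K)) * f = f * (T (a : Matrix (Fin n) (Fin n) K)) := by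
      rw [hf, ← map_mul T, ← map_mul T, h2]
    have h3 : aeval f r ∈ Algebra.adjoin K {f} := Polynomial.aeval_mem_adjoin_singleton K f
    have h4 : Algebra.adjoin K {f} ≤
        Subalgebra.centralizer K {T (a : Matrix (Fin n) (Fin n) K)} := by
      apply Algebra.adjoin_le
      intro y hy
      rw [Set.mem_singleton_iff] at hy
      subst hy
      rw [SetLike.mem_coe, Subalgebra.mem_centralizer_iff]
      rintro z rfl
      exact h1
    exact ((Subalgebra.mem_centralizer_iff K).mp (h4 h3) _ rfl).symm
  set N : K[X] → Submodule ↥C (Fin n → K) := fun g =>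
    { carrier := {v | aeval f g v = 0}
      add_mem' := by
        intro x y hx hy
        simp only [Set.mem_setOf_eq] at *
        rw [map_add, hx, hy, add_zero]
      zero_mem' := by simp
      smul_mem' := by
        intro a v hv
        simp only [Set.mem_setOf_eq] at *
        show aeval f g (T (a : Matrix (Fin n) (Fin n) K) v) = 0
        have h5 := congrArg (fun ℓ : Module.End K (Fin n → K) => ℓ v) (hcomm a g)
        simp only [Module.End.mul_apply] at h5
        rw [h5, hv, map_zero] } with hN
  have mem_N : ∀ (g : K[X]) (v : Fin n → K), v ∈ N g ↔ aeval f g v = 0 := fun g v => Iff.rfl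
  have hq0 : q ≠ 0 := hq.ne_zero
  set s : Finset K[X] := (normalizedFactors q).toFinset with hs
  have hsirr : ∀ g ∈ s, Irreducible g := fun g hg =>
    irreducible_of_normalized_factor g (Multiset.mem_toFinset.mp hg)
  have hnodup := (squarefree_iff_nodup_normalizedFactors hq0).mp hq
  have hsval : s.val = normalizedFactors q := by
    rw [hs, Multiset.toFinset_val, Multiset.dedup_eq_self.mpr hnodup]
  have hprod : ∏ g ∈ s, g = (normalizedFactors q).prod := by
    rw [← hsval, Finset.prod_eq_multiset_prod, Multiset.map_id']
  have hfq : aeval f q = 0 := by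
    have h1 := Polynomial.aeval_algHom_apply (R := K)
      (T : Matrix (Fin n) (Fin n) K →ₐ[K] Module.End K (Fin n → K)) c q
    rw [show f = (T : Matrix (Fin n) (Fin n) K →ₐ[K] Module.End K (Fin n → K)) c from rfl,
      h1, hann, map_zero]
  have hannprod : aeval f (∏ g ∈ s, g) = 0 := by
    obtain ⟨u, hu⟩ := prod_normalizedFactors hq0
    have h6 : (∏ g ∈ s, g) = q * ((u⁻¹ : K[X]ˣ) : K[X]) := by
      rw [hprod]
      exact (Units.eq_mul_inv_iff_mul_eq u).mpr hu
    rw [h6, map_mul, hfq, zero_mul]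
  have hpair : ∀ a ∈ s, ∀ b ∈ s, a ≠ b → IsCoprime a b := by
    intro a ha b hb hab
    rw [Irreducible.coprime_iff_not_dvd (hsirr a ha)]
    intro hdvd
    have hassoc' : Associated a b := (hsirr a ha).associated_of_dvd (hsirr b hb) hdvd
    apply hab
    calc a = normalize a := (normalize_normalized_factor a (Multiset.mem_toFinset.mp ha)).symm
    _ = normalize b := normalize_eq_normalize hdvd hassoc'.symm.dvd
    _ = b := normalize_normalized_factor b (Multiset.mem_toFinset.mp hb)
  have hKtop : (⨆ g ∈ s, LinearMap.ker (aeval f g) : Submodule K (Fin n → K)) = ⊤ := by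
    rw [← stmt13_ker_aeval_prod f s hpair, hannprod]
    exact LinearMap.ker_zero
  set P : {g // g ∈ s} → Submodule ↥C (Fin n → K) := fun g => N g.1 with hP
  have hCtop : ⨆ g : {g // g ∈ s}, P g = ⊤ := by
    rw [eq_top_iff]
    intro v _
    have hv : v ∈ ⨆ g : {g // g ∈ s}, LinearMap.ker (aeval f g.1) := by
      rw [iSup_subtype]
      rw [show (⨆ g, ⨆ (_ : g ∈ s), LinearMap.ker (aeval f g)) =
        ⨆ g ∈ s, LinearMap.ker (aeval f g) from rfl, hKtop]
      trivial
    refine Submodule.iSup_induction (motive := fun v => v ∈ ⨆ g : {g // g ∈ s}, P g) _ hv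
      ?_ ?_ ?_
    · intro g x hx
      exact (le_iSup P g) ((mem_N g.1 x).mpr (LinearMap.mem_ker.mp hx))
    · exact Submodule.zero_mem _
    · intro x y hx hy
      exact Submodule.add_mem _ hx hy
  -- transitivity data for each factor
  have htrans : ∀ (g : {g // g ∈ s}) (v w : Fin n → K), v ∈ N g.1 → w ∈ N g.1 → v ≠ 0 →
      ∃ a : ↥C, a • v = w := by
    rintro ⟨g, hg⟩ v w hvN hwN hv0
    have hgdvd : g ∣ q := dvd_of_mem_normalizedFactors (Multiset.mem_toFinset.mp hg)
    obtain ⟨h', hqgh⟩ := hgdvd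
    have hcopgh : IsCoprime g h' := by
      rw [Irreducible.coprime_iff_not_dvd (hsirr g hg)]
      intro hdvd2
      obtain ⟨t, rfl⟩ := hdvd2
      exact (hsirr g hg).not_isUnit (hq g ⟨t, by rw [hqgh]; ring⟩)
    have hanngh : aeval c (g * h') = 0 := by rw [← hqgh]; exact hann
    obtain ⟨a, haC, hav⟩ := stmt13_exists_centralizer_smul c g h' (hsirr g hg) hcopgh hanngh
      v w ((mem_N g v).mp hvN) ((mem_N g w).mp hwN) hv0
    exact ⟨⟨a, haC⟩, by rw [hsmul]; exact hav⟩
  have hPss : ∀ g : {g // g ∈ s}, IsSemisimpleModule ↥C ↥(P g) := by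
    intro g
    by_cases hbot : P g = ⊥
    · rw [hbot]
      exact { toComplementedLattice := Subsingleton.instComplementedLattice }
    · haveI : Nontrivial ↥(P g) := Submodule.nontrivial_iff_ne_bot.mpr hbot
      haveI hsimple : IsSimpleModule ↥C ↥(P g) := by
        refine @IsSimpleModule.mk _ _ _ _ _ { toNontrivial := inferInstance, eq_bot_or_eq_top := ?_ }
        intro Q
        by_cases hQ : Q = ⊥
        · exact Or.inl hQ
        · refine Or.inr ?_
          obtain ⟨x, hxQ, hx0⟩ := Q.ne_bot_iff.mp hQ
          rw [eq_top_iff]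
          intro y _
          obtain ⟨a, ha⟩ := htrans g (↑x) (↑y) x.2 y.2
            (fun h0 => hx0 (Subtype.ext h0))
          have hax : a • x = y := by
            apply Subtype.ext
            rw [Submodule.coe_smul]
            exact ha
          rw [← hax]
          exact Q.smul_mem _ hxQ
      infer_instance
  haveI hVss : IsSemisimpleModule ↥C (Fin n → K) :=
    isSemisimpleModule_of_isSemisimpleModule_submodule' hPss hCtop
  haveI : IsSemisimpleModule ↥C (Fin n → (Fin n → K)) :=
    stmt13_pi_isSemisimpleModule (fun _ : Fin n => Fin n → K)
  refine stmt13_semisimple_of_linear_inj (M := Fin n → (Fin n → K))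
    { toFun := fun a j => T (a : Matrix (Fin n) (Fin n) K) (Pi.single j 1)
      map_add' := ?_
      map_smul' := ?_ } ?_
  · intro a b
    funext j
    show T ((a + b : ↥C) : Matrix (Fin n) (Fin n) K) (Pi.single j 1) = _
    rw [show ((a + b : ↥C) : Matrix (Fin n) (Fin n) K) =
      (a : Matrix (Fin n) (Fin n) K) + b from rfl, map_add]
    rfl
  · intro b a
    funext j
    show T ((b * a : ↥C) : Matrix (Fin n) (Fin n) K) (Pi.single j 1) = _
    rw [show ((b * a : ↥C) : Matrix (Fin n) (Fin n) K) =
      (b : Matrix (Fin n) (Fin n) K) * a from rfl, map_mul]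
    show T (b : Matrix (Fin n) (Fin n) K) (T (a : Matrix (Fin n) (Fin n) K) (Pi.single j 1)) = _
    rw [← hsmul]
    rfl
  · intro a b hab
    apply Subtype.ext
    ext i j
    simp only [LinearMap.coe_mk, AddHom.coe_mk] at hab
    have h1 := congrFun (congrFun hab j) i
    show (a : Matrix (Fin n) (Fin n) K) i j = (b : Matrix (Fin n) (Fin n) K) i j
    rw [Matrix.toLinAlgEquiv'_apply, Matrix.toLinAlgEquiv'_apply, Matrix.mulVec_single] at h1
    simpa using h1

/-- Let `R` be a field of characteristic `p ≥ 0` and `σ` a permutation of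
`{1,...,n}` with permutation matrix `c_σ`. The centralizer algebra `S_n(c_σ, R)` is
semisimple if and only if `σ` equals its `p`-regular part, i.e. iff `p` does not divide the
length of any cycle of `σ` (for `p = 0` this divisibility never holds, so every permutation
is `p`-regular). -/
theorem stmt13 (R : Type*) [Field R] (n : ℕ) (σ : Equiv.Perm (Fin n)) :
    IsSemisimpleRing (Subalgebra.centralizer R {σ.permMatrix R} :
        Subalgebra R (Matrix (Fin n) (Fin n) R)) ↔
      ∀ l ∈ σ.cycleType, ¬ (ringChar R ∣ l) := by
  constructor
  · intro hss
    exact stmt13_forward σ hss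
  · intro hreg
    have hm0 : orderOf σ ≠ 0 := (orderOf_pos σ).ne'
    haveI := ringChar.charP R
    have hmK : ((orderOf σ : ℕ) : R) ≠ 0 := by
      intro h0
      have hdvd : ringChar R ∣ orderOf σ := (ringChar.spec R (orderOf σ)).mp h0
      rcases CharP.char_is_prime_or_zero R (ringChar R) with hp | hp
      · obtain ⟨l, hl, hpl⟩ := stmt13_prime_dvd_lcm hp σ.cycleType
          (by rw [Equiv.Perm.lcm_cycleType]; exact hdvd)
        exact hreg l hl hpl
      · rw [hp] at hdvd
        exact hm0 (zero_dvd_iff.mp hdvd)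
    have hsq : Squarefree ((X : R[X]) ^ orderOf σ - 1) := by
      have h1 := (Polynomial.separable_X_pow_sub_C (1 : R) hmK one_ne_zero).squarefree
      rwa [map_one] at h1
    have hann : aeval (σ.permMatrix R) ((X : R[X]) ^ orderOf σ - 1) = 0 := by
      rw [map_sub, map_pow, aeval_X, map_one, stmt13_permMatrix_pow, pow_orderOf_eq_one,
        stmt13_permMatrix_one, sub_self]
    exact stmt13_centralizer_semisimple (σ.permMatrix R) _ hsq hann
end
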